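/- arXiv:1802.05002 — 7 statements merged into one kernel-verified Lean document; each statement's English description precedes it below -/
import Mathlib

section
/- Let r ≥ 2 and let δ = Δ(A_r) ∩ {x ∈ ℝ^{r+1} : x_0 + x_1 = 1}. Then the set of weight-lattice points lying on δ, i.e. M(A_r) ∩ δ, equals {e_0 − e_k : 2 ≤ k ≤ r} ∪ {e_1 − e_k : 2 ≤ k ≤ r} when r ≠ 3, and when r = 3 it equals that set together with the one additional point (1/2)(e_0 + e_1 − e_2 − e_3). -/
/-!
Membership in `M(A_r)` makes all coordinates congruent modulo `ℤ`. Membership in `Δ(A_r)` makes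
the coordinate sum vanish and every partial coordinate sum at most `1`, since these linear
conditions hold at the roots. On the face `x₀ + x₁ = 1` this gives `x₀, x₁ ∈ [0, 1]`,
`x_k ∈ [-1, 0]` for `k ≥ 2`, and `x₀ - x₁ ∈ {-1, 0, 1}`. If `x₀ - x₁ = ±1`, the other coordinates
are nonpositive integers summing to `-1`, so `x` is a root. If `x₀ = x₁ = 1/2`, every other
coordinate lies in `(1/2 + ℤ) ∩ [-1, 0] = {-1/2}` and they sum to `-1`, so there are exactly two
of them, i.e. `r = 3`.
-/

noncomputable section

/-- The standard basis vector `e i` of `ℝ^(r+1)`. -/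
def e (r : ℕ) (i : Fin (r + 1)) : Fin (r + 1) → ℝ := Pi.single i 1

/-- The roots of type `A_r`: the vectors `e i - e j` for `i ≠ j`. -/
def rootsA (r : ℕ) : Set (Fin (r + 1) → ℝ) :=
  {v | ∃ i j : Fin (r + 1), i ≠ j ∧ v = e r i - e r j}

/-- The root polytope of type `A_r`: the convex hull of the roots. -/
def DeltaA (r : ℕ) : Set (Fin (r + 1) → ℝ) := convexHull ℝ (rootsA r)

/-- The weight lattice of type `A_r`: the additive subgroup generated by the roots
together with `e 0 - (e 0 + ⋯ + e r)/(r+1)`. -/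
def MA (r : ℕ) : AddSubgroup (Fin (r + 1) → ℝ) :=
  AddSubgroup.closure (rootsA r ∪ {e r 0 - ((r : ℝ) + 1)⁻¹ • ∑ i, e r i})

open Finset

theorem isLinearMap_sum_apply {ι R M : Type*} [Semiring R] [AddCommMonoid M] [Module R M]
    (s : Finset ι) : IsLinearMap R fun x : ι → M => ∑ i ∈ s, x i :=
  ⟨fun _ _ => sum_add_distrib, fun _ _ => by simp only [Pi.smul_apply, smul_sum]⟩

theorem intCast_eq_zero_or_one {n : ℤ} (h₀ : 0 ≤ (n : ℝ)) (h₁ : (n : ℝ) ≤ 1) :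
    (n : ℝ) = 0 ∨ (n : ℝ) = 1 := by
  have : 0 ≤ n := by exact_mod_cast h₀
  have : n ≤ 1 := by exact_mod_cast h₁
  interval_cases n <;> simp

def intDiffSubgroup (ι : Type*) : AddSubgroup (ι → ℝ) where
  carrier := {x | ∀ i j, ∃ n : ℤ, x i - x j = n}
  zero_mem' _ _ := ⟨0, by simp⟩
  add_mem' {x y} hx hy i j := by
    obtain ⟨m, hm⟩ := hx i j
    obtain ⟨n, hn⟩ := hy i j
    exact ⟨m + n, by push_cast; simp only [Pi.add_apply]; linarith⟩
  neg_mem' {x} hx i j := by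
    obtain ⟨m, hm⟩ := hx i j
    exact ⟨-m, by push_cast; simp only [Pi.neg_apply]; linarith⟩

theorem mem_intDiffSubgroup_of_eq_add_int {ι : Type*} {x : ι → ℝ} (c : ℝ)
    (h : ∀ i, ∃ n : ℤ, x i = c + n) :
    x ∈ intDiffSubgroup ι := fun i j => by
  obtain ⟨m, hm⟩ := h i
  obtain ⟨n, hn⟩ := h j
  exact ⟨m - n, by rw [hm, hn]; push_cast; ring⟩

section

variable {ι : Type*} [Fintype ι] [DecidableEq ι]

theorem exists_eq_single_of_sum_eq_one {z : ι → ℝ} (hnonneg : ∀ i, 0 ≤ z i)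
    (hint : ∀ i, ∃ n : ℤ, z i = n) (hsum : ∑ i, z i = 1) : ∃ k, z = Pi.single k 1 := by
  have hle : ∀ i, z i ≤ 1 := fun i => hsum ▸ single_le_sum (fun j _ => hnonneg j) (mem_univ i)
  have hbin : ∀ i, z i = 0 ∨ z i = 1 := fun i => by
    obtain ⟨n, hn⟩ := hint i
    exact hn ▸ intCast_eq_zero_or_one (hn ▸ hnonneg i) (hn ▸ hle i)
  obtain ⟨k, hk⟩ : ∃ k, z k = 1 := by
    by_contra! h
    have : ∀ i, z i = 0 := fun i => (hbin i).resolve_right (h i)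
    simp [this] at hsum
  refine ⟨k, funext fun i => ?_⟩
  rcases eq_or_ne i k with rfl | hik
  · simp [hk]
  · have := add_le_sum (fun j _ => hnonneg j) (mem_univ i) (mem_univ k) hik
    rw [hsum, hk] at this
    simp [hik, le_antisymm (by linarith) (hnonneg i)]

variable {x : ι → ℝ} {a b : ι}

theorem exists_eq_single_sub_single_of_apply_eq_one (hab : a ≠ b) (hx : x ∈ intDiffSubgroup ι)
    (hsum : ∑ i, x i = 0) (hle : ∀ s : Finset ι, ∑ i ∈ s, x i ≤ 1) (ha : x a = 1) (hb : x b = 0) :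
    ∃ k, k ≠ a ∧ k ≠ b ∧ x = Pi.single a 1 - Pi.single k 1 := by
  set z : ι → ℝ := Pi.single a 1 - x with hz
  have hz_apply : ∀ i, z i = (if i = a then 1 else 0) - x i := fun i => by
    simp [hz, Pi.single_apply]
  have hnonneg : ∀ i, 0 ≤ z i := fun i => by
    rcases eq_or_ne i a with rfl | hia
    · simp [hz_apply, ha]
    · have := hle {i, a}
      rw [sum_pair hia, ha] at this
      rw [hz_apply, if_neg hia]
      linarith
  have hint : ∀ i, ∃ n : ℤ, z i = n := fun i => by
    obtain ⟨n, hn⟩ := hx a i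
    exact ⟨n + (if i = a then 1 else 0) - 1, by rw [hz_apply]; push_cast; split_ifs <;> linarith⟩
  obtain ⟨k, hk⟩ :=
    exists_eq_single_of_sum_eq_one hnonneg hint (by simp [hz, sum_sub_distrib, hsum])
  refine ⟨k, ?_, ?_, by rw [← hk, hz]; abel⟩
  · rintro rfl
    simpa [hz_apply, ha] using congrFun hk k
  · rintro rfl
    simpa [hz_apply, hb, hab.symm] using congrFun hk k

theorem card_eq_four_of_apply_eq_half (hab : a ≠ b) (hx : x ∈ intDiffSubgroup ι)
    (hsum : ∑ i, x i = 0) (hle : ∀ s : Finset ι, ∑ i ∈ s, x i ≤ 1) (ha : x a = 1 / 2)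
    (hb : x b = 1 / 2) : Fintype.card ι = 4 ∧ ∀ k, k ≠ a → k ≠ b → x k = -1 / 2 := by
  have hrest : ∀ k, k ≠ a → k ≠ b → x k = -1 / 2 := by
    intro k hka hkb
    have hupper := hle {k, a, b}
    rw [sum_insert (by simp [hka, hkb]), sum_pair hab, ha, hb] at hupper
    have hlower := hle (univ.erase k)
    rw [sum_erase_eq_sub (mem_univ k), hsum] at hlower
    obtain ⟨n, hn⟩ := hx k a
    have : n = -1 := by
      have : -2 < n := by exact_mod_cast (by linarith : (-2 : ℝ) < n)
      have : n < 0 := by exact_mod_cast (by linarith : (n : ℝ) < 0)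
      omega
    subst this
    push_cast at hn
    linarith
  refine ⟨?_, hrest⟩
  have hcompl := sum_add_sum_compl {a, b} x
  rw [sum_pair hab, ha, hb, hsum, sum_congr rfl fun k hk => hrest k (by simp_all) (by simp_all),
    sum_const, card_compl, card_pair hab, nsmul_eq_mul] at hcompl
  have : ((Fintype.card ι - 2 : ℕ) : ℝ) = 2 := by linarith
  have : Fintype.card ι - 2 = 2 := by exact_mod_cast this
  omega

theorem eq_single_sub_single_or_card_eq_four (hab : a ≠ b) (hx : x ∈ intDiffSubgroup ι)
    (hsum : ∑ i, x i = 0) (hle : ∀ s : Finset ι, ∑ i ∈ s, x i ≤ 1) (hx₁ : x a + x b = 1) :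
    (∃ k, k ≠ a ∧ k ≠ b ∧ (x = Pi.single a 1 - Pi.single k 1 ∨ x = Pi.single b 1 - Pi.single k 1)) ∨
      (Fintype.card ι = 4 ∧ x a = 1 / 2 ∧ x b = 1 / 2 ∧ ∀ k, k ≠ a → k ≠ b → x k = -1 / 2) := by
  have ha := hle {a}
  have hb := hle {b}
  rw [sum_singleton] at ha hb
  obtain ⟨n, hn⟩ := hx a b
  have hn' : n = -1 ∨ n = 0 ∨ n = 1 := by
    have : -2 < n := by exact_mod_cast (by linarith : (-2 : ℝ) < n)
    have : n < 2 := by exact_mod_cast (by linarith : (n : ℝ) < 2)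
    omega
  rcases hn' with rfl | rfl | rfl <;> push_cast at hn
  · obtain ⟨k, hkb, hka, hk⟩ := exists_eq_single_sub_single_of_apply_eq_one hab.symm hx hsum hle
      (by linarith) (by linarith)
    exact Or.inl ⟨k, hka, hkb, Or.inr hk⟩
  · obtain ⟨hcard, hrest⟩ :=
      card_eq_four_of_apply_eq_half hab hx hsum hle (by linarith) (by linarith)
    exact Or.inr ⟨hcard, by linarith, by linarith, hrest⟩
  · obtain ⟨k, hka, hkb, hk⟩ := exists_eq_single_sub_single_of_apply_eq_one hab hx hsum hle
      (by linarith) (by linarith)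
    exact Or.inl ⟨k, hka, hkb, Or.inl hk⟩

end

theorem Fin.two_le_val_iff {r : ℕ} (hr : 1 ≤ r) (k : Fin (r + 1)) :
    2 ≤ (k : ℕ) ↔ k ≠ 0 ∧ k ≠ 1 := by
  simp only [ne_eq, Fin.ext_iff, Fin.val_zero, Fin.val_one',
    Nat.mod_eq_of_lt (by omega : 1 < r + 1)]
  omega

theorem MA_le_intDiffSubgroup (r : ℕ) : MA r ≤ intDiffSubgroup (Fin (r + 1)) := by
  rw [MA, AddSubgroup.closure_le]
  rintro v (⟨i, j, -, rfl⟩ | rfl)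
  · refine mem_intDiffSubgroup_of_eq_add_int 0 fun k =>
      ⟨(if k = i then 1 else 0) - (if k = j then 1 else 0), ?_⟩
    simp only [e, Pi.sub_apply, Pi.single_apply]
    split_ifs <;> simp
  · refine mem_intDiffSubgroup_of_eq_add_int (-((r : ℝ) + 1)⁻¹) fun k =>
      ⟨if k = 0 then 1 else 0, ?_⟩
    simp only [e, Pi.sub_apply, Pi.smul_apply, Finset.sum_apply, Pi.single_apply]
    split_ifs <;> simp; ring

theorem DeltaA_subset_setOf_sum_eq_zero (r : ℕ) : DeltaA r ⊆ {x | ∑ i, x i = 0} :=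
  convexHull_min (by rintro _ ⟨i, j, -, rfl⟩; simp [e, sum_sub_distrib])
    (convex_hyperplane (isLinearMap_sum_apply _) 0)

theorem DeltaA_subset_setOf_sum_le_one (r : ℕ) (s : Finset (Fin (r + 1))) :
    DeltaA r ⊆ {x | ∑ i ∈ s, x i ≤ 1} :=
  convexHull_min
    (by rintro _ ⟨i, j, -, rfl⟩
        simp only [Set.mem_ofPred_eq, e, Pi.sub_apply, sum_sub_distrib, sum_pi_single']
        split_ifs <;> norm_num)
    (convex_halfSpace_le (isLinearMap_sum_apply _) 1)

theorem sub_mem_MA_and_DeltaA {r : ℕ} {i j : Fin (r + 1)} (hij : i ≠ j) :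
    e r i - e r j ∈ MA r ∧ e r i - e r j ∈ DeltaA r :=
  ⟨AddSubgroup.subset_closure (Or.inl ⟨i, j, hij, rfl⟩), subset_convexHull ℝ _ ⟨i, j, hij, rfl⟩⟩

theorem mem_MA_and_DeltaA_of_two_le {r : ℕ} (hr : 1 ≤ r) {x : Fin (r + 1) → ℝ}
    (hx : ∃ k : Fin (r + 1), 2 ≤ (k : ℕ) ∧ (x = e r 0 - e r k ∨ x = e r 1 - e r k)) :
    x ∈ MA r ∧ x ∈ DeltaA r ∧ x 0 + x 1 = 1 := by
  obtain ⟨k, hk, hx⟩ := hx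
  obtain ⟨hk0, hk1⟩ := (Fin.two_le_val_iff hr k).1 hk
  have h0 := sub_mem_MA_and_DeltaA hk0.symm
  have h1 := sub_mem_MA_and_DeltaA hk1.symm
  rcases hx with rfl | rfl
  · exact ⟨h0.1, h0.2, by simp [e, hk0.symm, hk1.symm, show r ≠ 0 by omega]⟩
  · exact ⟨h1.1, h1.2, by simp [e, hk0.symm, hk1.symm, show r ≠ 0 by omega]⟩

theorem halfPoint_mem_MA_and_DeltaA :
    (1 / 2 : ℝ) • (e 3 0 + e 3 1 - e 3 2 - e 3 3) ∈ MA 3 ∧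
      (1 / 2 : ℝ) • (e 3 0 + e 3 1 - e 3 2 - e 3 3) ∈ DeltaA 3 := by
  constructor
  · have hω : e 3 0 - (((3 : ℕ) : ℝ) + 1)⁻¹ • ∑ i, e 3 i ∈ MA 3 :=
      AddSubgroup.subset_closure (Or.inr rfl)
    have hα := (sub_mem_MA_and_DeltaA (r := 3) (i := 0) (j := 1) (by decide)).1
    convert sub_mem (add_mem hω hω) hα using 1
    rw [Fin.sum_univ_four]
    module
  · have h := convex_convexHull ℝ (rootsA 3)
      (sub_mem_MA_and_DeltaA (r := 3) (i := 0) (j := 2) (by decide)).2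
      (sub_mem_MA_and_DeltaA (r := 3) (i := 1) (j := 3) (by decide)).2
      (by norm_num : (0 : ℝ) ≤ 1 / 2) (by norm_num : (0 : ℝ) ≤ 1 / 2) (by norm_num)
    rwa [show (1 / 2 : ℝ) • (e 3 0 + e 3 1 - e 3 2 - e 3 3) =
      (1 / 2 : ℝ) • (e 3 0 - e 3 2) + (1 / 2 : ℝ) • (e 3 1 - e 3 3) by module]

theorem stmt0 (r : ℕ) (hr : 2 ≤ r) :
    (MA r : Set (Fin (r + 1) → ℝ)) ∩ (DeltaA r ∩ {x | x 0 + x 1 = 1}) =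
      if r = 3 then
        {v | ∃ k : Fin (r + 1), 2 ≤ (k : ℕ) ∧ (v = e r 0 - e r k ∨ v = e r 1 - e r k)}
          ∪ {(1 / 2 : ℝ) • (e r 0 + e r 1 - e r 2 - e r 3)}
      else
        {v | ∃ k : Fin (r + 1), 2 ≤ (k : ℕ) ∧ (v = e r 0 - e r k ∨ v = e r 1 - e r k)} := by
  have hr₁ : 1 ≤ r := by omega
  ext x
  simp only [Set.mem_inter_iff, SetLike.mem_coe, Set.mem_ofPred_eq]
  constructor
  · rintro ⟨hM, hΔ, hx₁⟩
    have h01 : (0 : Fin (r + 1)) ≠ 1 := by simp [Fin.ext_iff, show r ≠ 0 by omega]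
    rcases eq_single_sub_single_or_card_eq_four h01 (MA_le_intDiffSubgroup r hM)
      (DeltaA_subset_setOf_sum_eq_zero r hΔ) (fun s => DeltaA_subset_setOf_sum_le_one r s hΔ) hx₁
      with ⟨k, hk0, hk1, hk⟩ | ⟨hcard, hx0, hx1, hxk⟩
    · have hroot : ∃ k : Fin (r + 1), 2 ≤ (k : ℕ) ∧ (x = e r 0 - e r k ∨ x = e r 1 - e r k) :=
        ⟨k, (Fin.two_le_val_iff hr₁ k).2 ⟨hk0, hk1⟩, hk⟩
      split_ifs
      exacts [Or.inl hroot, hroot]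
    · obtain rfl : r = 3 := by simpa using hcard
      refine Or.inr (funext fun j => ?_)
      fin_cases j <;> simp [e, hx0, hx1, hxk] <;> norm_num
  · intro hx
    split_ifs at hx with h3
    · subst h3
      rcases hx with hx | rfl
      · exact mem_MA_and_DeltaA_of_two_le hr₁ hx
      · refine ⟨halfPoint_mem_MA_and_DeltaA.1, halfPoint_mem_MA_and_DeltaA.2, ?_⟩
        simp [e]
        norm_num
    · exact mem_MA_and_DeltaA_of_two_le hr₁ hx
end
end

section
/- Let r ≥ 3 and let σ be the convex cone generated by Δ − (e_1 + e_2). Then every point v ∈ M with v ∈ σ and v ∈ −e_1 − e_2 − σ (i.e. −e_1 − e_2 − v ∈ σ) satisfies at least one of the following: (i) v_1 = 0 or v_2 = 0; (ii) v = −e_1 − e_2; (iii) r = 4 and v = −(1/2)(e_1 + e_2 + ε_3 e_3 + ε_4 e_4) for some signs ε_3, ε_4 ∈ {1, −1}; (iv) r = 3 and v = −(1/2)(e_1 + e_2 + ε_3 e_3) for some sign ε_3 ∈ {1, −1}. -/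
noncomputable section

/-- The standard basis vector `e i` of `ℝ^r` (indices are 0-based, so `b r 0` is `e₁`,
`b r 1` is `e₂`, etc.). -/
def b (r : ℕ) (i : Fin r) : Fin r → ℝ := Pi.single i 1

/-- The roots of types `B_r`/`D_r` spanning the root polytope:
the vectors `±e_i ± e_j` for `i ≠ j`. -/
def rootsBD (r : ℕ) : Set (Fin r → ℝ) :=
  {v | ∃ (i j : Fin r) (ε δ : ℝ), i ≠ j ∧ (ε = 1 ∨ ε = -1) ∧ (δ = 1 ∨ δ = -1) ∧
    v = ε • b r i + δ • b r j}

/-- The root polytope of types `B_r`/`D_r`. -/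
def DeltaBD (r : ℕ) : Set (Fin r → ℝ) := convexHull ℝ (rootsBD r)

/-- The weight lattice `M = ℤ^r + ℤ·(1/2, …, 1/2)`. -/
def MBD (r : ℕ) : AddSubgroup (Fin r → ℝ) :=
  AddSubgroup.closure ({v | ∃ i : Fin r, v = b r i} ∪ {fun _ => (1 / 2 : ℝ)})

/-- The convex cone generated by a set `S`: all finite sums of nonnegative real multiples
of elements of `S`. -/
def coneGen {V : Type*} [AddCommMonoid V] [Module ℝ V] (S : Set V) : Set V :=
  {x | ∃ (n : ℕ) (c : Fin n → ℝ) (f : Fin n → V),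
    (∀ i, 0 ≤ c i) ∧ (∀ i, f i ∈ S) ∧ x = ∑ i, c i • f i}

lemma cone_bound {r : ℕ} (i0 i1 : Fin r) (L : (Fin r → ℝ) → ℝ)
    (hadd : ∀ a b, L (a + b) ≤ L a + L b)
    (hsmul : ∀ (c : ℝ), 0 ≤ c → ∀ a, L (c • a) = c * L a)
    (hroots : ∀ x ∈ rootsBD r, L (x - (b r i0 + b r i1)) ≤ 0)
    {v : Fin r → ℝ}
    (hv : v ∈ coneGen ((fun x => x - (b r i0 + b r i1)) '' DeltaBD r)) :
    L v ≤ 0 := by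
  set p := b r i0 + b r i1 with hp
  have hzero : L 0 = 0 := by
    have := hsmul 0 le_rfl 0
    simpa using this
  have hconv : Convex ℝ {x | L (x - p) ≤ 0} := by
    intro a ha b hb s t hs ht hst
    have key : s • a + t • b - p = s • (a - p) + t • (b - p) := by
      have h1 : s • (a - p) + t • (b - p) = s • a + t • b - (s + t) • p := by module
      rw [hst, one_smul] at h1
      rw [h1]
    have h2 : L (s • a + t • b - p) ≤ s * L (a - p) + t * L (b - p) := by
      rw [key]
      calc L (s • (a - p) + t • (b - p)) ≤ L (s • (a - p)) + L (t • (b - p)) := hadd _ _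
        _ = s * L (a - p) + t * L (b - p) := by rw [hsmul s hs, hsmul t ht]
    have := mul_nonpos_of_nonneg_of_nonpos hs ha
    have := mul_nonpos_of_nonneg_of_nonpos ht hb
    simp only [Set.mem_setOf_eq]
    linarith
  have himg : ∀ y ∈ (fun x => x - p) '' DeltaBD r, L y ≤ 0 := by
    rintro y ⟨x, hx, rfl⟩
    have hsub : DeltaBD r ⊆ {x | L (x - p) ≤ 0} :=
      convexHull_min (fun z hz => hroots z hz) hconv
    exact hsub hx
  obtain ⟨n, c, f, hc, hf, rfl⟩ := hv
  have hterm : ∀ i, L (c i • f i) ≤ 0 := by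
    intro i
    rw [hsmul (c i) (hc i)]
    exact mul_nonpos_of_nonneg_of_nonpos (hc i) (himg _ (hf i))
  have : ∀ s : Finset (Fin n), L (∑ i ∈ s, c i • f i) ≤ 0 := by
    intro s
    induction s using Finset.induction with
    | empty => simp [hzero]
    | @insert j s hni ih =>
      rw [Finset.sum_insert hni]
      have h1 := hadd (c j • f j) (∑ i ∈ s, c i • f i)
      have h2 := hterm j
      linarith
  exact this _

def lattSub (r : ℕ) : AddSubgroup (Fin r → ℝ) where
  carrier := {v | (∀ i, ∃ n : ℤ, 2 * v i = n) ∧ (∀ i j, ∃ n : ℤ, v i - v j = n)}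
  zero_mem' := ⟨fun i => ⟨0, by simp⟩, fun i j => ⟨0, by simp⟩⟩
  add_mem' := by
    rintro a c ⟨ha1, ha2⟩ ⟨hc1, hc2⟩
    refine ⟨fun i => ?_, fun i j => ?_⟩
    · obtain ⟨n, hn⟩ := ha1 i; obtain ⟨m, hm⟩ := hc1 i
      exact ⟨n + m, by push_cast; simp only [Pi.add_apply]; linarith⟩
    · obtain ⟨n, hn⟩ := ha2 i j; obtain ⟨m, hm⟩ := hc2 i j
      exact ⟨n + m, by push_cast; simp only [Pi.add_apply]; linarith⟩
  neg_mem' := by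
    rintro a ⟨ha1, ha2⟩
    refine ⟨fun i => ?_, fun i j => ?_⟩
    · obtain ⟨n, hn⟩ := ha1 i
      exact ⟨-n, by push_cast; simp only [Pi.neg_apply]; linarith⟩
    · obtain ⟨n, hn⟩ := ha2 i j
      exact ⟨-n, by push_cast; simp only [Pi.neg_apply]; linarith⟩

lemma latt {r : ℕ} {v : Fin r → ℝ} (hv : v ∈ MBD r) :
    (∀ i, ∃ n : ℤ, 2 * v i = n) ∧ (∀ i j, ∃ n : ℤ, v i - v j = n) := by
  have hle : MBD r ≤ lattSub r := by
    rw [MBD, AddSubgroup.closure_le]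
    rintro x (⟨i, rfl⟩ | hx)
    · refine ⟨fun k => ?_, fun k j => ?_⟩
      · by_cases h : k = i
        · exact ⟨2, by simp [b, h, Pi.single_apply]⟩
        · exact ⟨0, by simp [b, h, Pi.single_apply]⟩
      · simp only [b, Pi.single_apply]
        split_ifs <;> [exact ⟨0, by norm_num⟩; exact ⟨1, by norm_num⟩;
          exact ⟨-1, by norm_num⟩; exact ⟨0, by norm_num⟩]
    · simp only [Set.mem_singleton_iff] at hx
      subst hx
      exact ⟨fun i => ⟨1, by norm_num⟩, fun i j => ⟨0, by norm_num⟩⟩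
  exact hle hv

lemma coord_bound {r : ℕ} (i0 i1 : Fin r) (h01 : i0 ≠ i1) (k : Fin r)
    (hk : k = i0 ∨ k = i1) {v : Fin r → ℝ}
    (hv : v ∈ coneGen ((fun x => x - (b r i0 + b r i1)) '' DeltaBD r)) :
    v k ≤ 0 := by
  refine cone_bound i0 i1 (fun w => w k) (fun a b => le_of_eq rfl)
    (fun c hc a => rfl) ?_ hv
  rintro x ⟨i, j, ε, δ, hij, hε, hδ, rfl⟩
  have hpk : (b r i0 + b r i1) k = 1 := by
    rcases hk with rfl | rfl <;>
      simp [b, Pi.single_apply, h01, h01.symm, Ne.symm]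
  simp only [Pi.sub_apply, Pi.add_apply, Pi.smul_apply, smul_eq_mul, b,
    Pi.single_apply, hpk]
  rcases hε with rfl | rfl <;> rcases hδ with rfl | rfl <;>
    split_ifs <;> first | simp_all | norm_num | linarith

lemma L3_bound {r : ℕ} (i0 i1 : Fin r) (h01 : i0 ≠ i1) {v : Fin r → ℝ}
    (hv : v ∈ coneGen ((fun x => x - (b r i0 + b r i1)) '' DeltaBD r)) :
    v i0 + v i1 + ∑ k ∈ ({i0, i1} : Finset (Fin r))ᶜ, |v k| ≤ 0 := by
  have hcompl : ∀ k, k ∈ ({i0, i1} : Finset (Fin r))ᶜ ↔ (k ≠ i0 ∧ k ≠ i1) := by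
    intro k; simp [Finset.mem_compl]
  refine cone_bound i0 i1
    (fun w => w i0 + w i1 + ∑ k ∈ ({i0, i1} : Finset (Fin r))ᶜ, |w k|) ?_ ?_ ?_ hv
  · intro a c
    simp only [Pi.add_apply]
    have hs : ∑ k ∈ ({i0, i1} : Finset (Fin r))ᶜ, |a k + c k| ≤
        (∑ k ∈ ({i0, i1} : Finset (Fin r))ᶜ, |a k|) +
        ∑ k ∈ ({i0, i1} : Finset (Fin r))ᶜ, |c k| := by
      rw [← Finset.sum_add_distrib]
      exact Finset.sum_le_sum fun k _ => abs_add_le _ _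
    linarith
  · intro c hc a
    simp only [Pi.smul_apply, smul_eq_mul]
    have : ∀ k ∈ ({i0, i1} : Finset (Fin r))ᶜ, |c * a k| = c * |a k| := by
      intro k _; rw [abs_mul, abs_of_nonneg hc]
    rw [Finset.sum_congr rfl this, ← Finset.mul_sum]
    ring
  · rintro x ⟨i, j, ε, δ, hij, hε, hδ, rfl⟩
    set x := ε • b r i + δ • b r j with hx
    set p := b r i0 + b r i1 with hp
    have hcoord : ∀ k, |x k| ≤ (if k = i then 1 else 0) + (if k = j then 1 else 0) := by
      intro k
      have : x k = ε * (if k = i then 1 else 0) + δ * (if k = j then 1 else 0) := by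
        simp [hx, b, Pi.single_apply]
      rw [this]
      calc |ε * (if k = i then (1:ℝ) else 0) + δ * (if k = j then 1 else 0)|
          ≤ |ε * (if k = i then (1:ℝ) else 0)| + |δ * (if k = j then 1 else 0)| := abs_add_le _ _
        _ = (if k = i then (1:ℝ) else 0) + (if k = j then 1 else 0) := by
            rcases hε with rfl | rfl <;> rcases hδ with rfl | rfl <;>
              split_ifs <;> norm_num
    have hsum2 : ∑ k, |x k| ≤ 2 := by
      calc ∑ k, |x k| ≤ ∑ k, ((if k = i then (1:ℝ) else 0) + (if k = j then 1 else 0)) :=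
            Finset.sum_le_sum fun k _ => hcoord k
        _ = 2 := by rw [Finset.sum_add_distrib]; simp; norm_num
    have hsplit : (|x i0| + |x i1|) + ∑ k ∈ ({i0, i1} : Finset (Fin r))ᶜ, |x k|
        = ∑ k, |x k| := by
      have h := Finset.sum_add_sum_compl ({i0, i1} : Finset (Fin r)) (fun k => |x k|)
      rw [Finset.sum_pair h01] at h
      exact h
    have hpi0 : p i0 = 1 := by simp [hp, b, Pi.single_apply, h01, Ne.symm h01]
    have hpi1 : p i1 = 1 := by simp [hp, b, Pi.single_apply, h01, Ne.symm h01]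
    have hpk : ∀ k, k ≠ i0 → k ≠ i1 → p k = 0 := by
      intro k hk0 hk1; simp [hp, b, Pi.single_apply, hk0, hk1]
    have hrw : ∑ k ∈ ({i0, i1} : Finset (Fin r))ᶜ, |(x - p) k|
        = ∑ k ∈ ({i0, i1} : Finset (Fin r))ᶜ, |x k| := by
      refine Finset.sum_congr rfl fun k hk => ?_
      obtain ⟨hk0, hk1⟩ := (hcompl k).mp hk
      simp [hpk k hk0 hk1]
    have h0 : (x - p) i0 = x i0 - 1 := by simp [hpi0]
    have h1 : (x - p) i1 = x i1 - 1 := by simp [hpi1]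
    show (x - p) i0 + (x - p) i1 + ∑ k ∈ ({i0, i1} : Finset (Fin r))ᶜ, |(x - p) k| ≤ 0
    rw [h0, h1, hrw]
    have ha0 : x i0 ≤ |x i0| := le_abs_self _
    have ha1 : x i1 ≤ |x i1| := le_abs_self _
    linarith

theorem stmt1 (r : ℕ) (hr : 3 ≤ r) (v : Fin r → ℝ)
    (hvM : v ∈ MBD r)
    (hσ : v ∈ coneGen
      ((fun x => x - (b r ⟨0, by omega⟩ + b r ⟨1, by omega⟩)) '' DeltaBD r))
    (hσ' : -b r ⟨0, by omega⟩ - b r ⟨1, by omega⟩ - v ∈ coneGen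
      ((fun x => x - (b r ⟨0, by omega⟩ + b r ⟨1, by omega⟩)) '' DeltaBD r)) :
    (v ⟨0, by omega⟩ = 0 ∨ v ⟨1, by omega⟩ = 0) ∨
    v = -b r ⟨0, by omega⟩ - b r ⟨1, by omega⟩ ∨
    (∃ h4 : r = 4, ∃ ε₃ ε₄ : ℝ, (ε₃ = 1 ∨ ε₃ = -1) ∧ (ε₄ = 1 ∨ ε₄ = -1) ∧
      v = -((1 / 2 : ℝ) • (b r ⟨0, by omega⟩ + b r ⟨1, by omega⟩ +
        ε₃ • b r ⟨2, by omega⟩ + ε₄ • b r ⟨3, by omega⟩))) ∨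
    (∃ h3 : r = 3, ∃ ε₃ : ℝ, (ε₃ = 1 ∨ ε₃ = -1) ∧
      v = -((1 / 2 : ℝ) • (b r ⟨0, by omega⟩ + b r ⟨1, by omega⟩ +
        ε₃ • b r ⟨2, by omega⟩))) := by
  set i0 : Fin r := ⟨0, by omega⟩ with hi0
  set i1 : Fin r := ⟨1, by omega⟩ with hi1
  have h01 : i0 ≠ i1 := by rw [hi0, hi1]; simp [Fin.ext_iff]
  have hA : v i0 ≤ 0 := coord_bound i0 i1 h01 i0 (Or.inl rfl) hσ
  have hB : v i1 ≤ 0 := coord_bound i0 i1 h01 i1 (Or.inr rfl) hσ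
  have e0 : (-b r i0 - b r i1 - v) i0 = -1 - v i0 := by
    simp [b, Pi.single_apply, h01, Ne.symm h01]
  have e1 : (-b r i0 - b r i1 - v) i1 = -1 - v i1 := by
    simp [b, Pi.single_apply, h01, Ne.symm h01]
  have hA' : -1 ≤ v i0 := by
    have h := coord_bound i0 i1 h01 i0 (Or.inl rfl) hσ'
    rw [e0] at h; linarith
  have hB' : -1 ≤ v i1 := by
    have h := coord_bound i0 i1 h01 i1 (Or.inr rfl) hσ'
    rw [e1] at h; linarith
  have hcompl : ∀ k : Fin r, k ∈ ({i0, i1} : Finset (Fin r))ᶜ ↔ (k ≠ i0 ∧ k ≠ i1) := by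
    intro k; simp [Finset.mem_compl]
  have h1 := L3_bound i0 i1 h01 hσ
  have h2 := L3_bound i0 i1 h01 hσ'
  rw [e0, e1] at h2
  have esum : ∑ k ∈ ({i0, i1} : Finset (Fin r))ᶜ, |(-b r i0 - b r i1 - v) k|
      = ∑ k ∈ ({i0, i1} : Finset (Fin r))ᶜ, |v k| := by
    refine Finset.sum_congr rfl fun k hk => ?_
    obtain ⟨hk0, hk1⟩ := (hcompl k).mp hk
    have : (-b r i0 - b r i1 - v) k = -v k := by
      simp [b, Pi.single_apply, hk0, hk1]
    rw [this, abs_neg]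
  rw [esum] at h2
  set S := ∑ k ∈ ({i0, i1} : Finset (Fin r))ᶜ, |v k| with hS
  have hS0 : 0 ≤ S := Finset.sum_nonneg fun k _ => abs_nonneg _
  obtain ⟨l1, l2⟩ := latt hvM
  obtain ⟨n0, hn0⟩ := l1 i0
  have hub : n0 ≤ 0 := by exact_mod_cast (by linarith : (n0:ℝ) ≤ 0)
  have hlb : -2 ≤ n0 := by exact_mod_cast (by linarith : (-2:ℝ) ≤ (n0:ℝ))
  interval_cases n0
  · -- n0 = -2 : v i0 = -1
    have hv0 : v i0 = -1 := by push_cast at hn0; linarith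
    obtain ⟨m, hm⟩ := l2 i0 i1
    have hmub : m ≤ 0 := by exact_mod_cast (by linarith : (m:ℝ) ≤ 0)
    have hmlb : -1 ≤ m := by exact_mod_cast (by linarith : (-1:ℝ) ≤ (m:ℝ))
    interval_cases m
    · -- v i1 = 0
      push_cast at hm
      exact Or.inl (Or.inr (by linarith))
    · -- v i1 = -1
      have hv1 : v i1 = -1 := by push_cast at hm; linarith
      have hSz : S = 0 := le_antisymm (by linarith) hS0
      have hzero : ∀ k ∈ ({i0, i1} : Finset (Fin r))ᶜ, |v k| = 0 := by
        rw [hS] at hSz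
        exact (Finset.sum_eq_zero_iff_of_nonneg fun k _ => abs_nonneg _).mp hSz
      refine Or.inr (Or.inl ?_)
      funext k
      by_cases hk0 : k = i0
      · subst hk0; simp [b, Pi.single_apply, h01, Ne.symm h01, hv0]
      · by_cases hk1 : k = i1
        · subst hk1; simp [b, Pi.single_apply, h01, Ne.symm h01, hv1]
        · have := hzero k ((hcompl k).mpr ⟨hk0, hk1⟩)
          rw [abs_eq_zero] at this
          simp [b, Pi.single_apply, hk0, hk1, this]
  · -- n0 = -1 : v i0 = -1/2
    have hv0 : v i0 = -1/2 := by push_cast at hn0; linarith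
    obtain ⟨m, hm⟩ := l2 i0 i1
    have hm0 : m = 0 := by
      have h1' : (m:ℝ) < 1 := by linarith
      have h2' : (-1:ℝ) < (m:ℝ) := by linarith
      have : m < 1 := by exact_mod_cast h1'
      have : -1 < m := by exact_mod_cast h2'
      omega
    have hv1 : v i1 = -1/2 := by rw [hm0] at hm; push_cast at hm; linarith
    have hSle : S ≤ 1 := by linarith
    have hkey : ∀ k : Fin r, ∃ mk : ℤ, 2 * v k = 2 * (mk:ℝ) - 1 := by
      intro k
      obtain ⟨mk, hmk⟩ := l2 k i0
      exact ⟨mk, by rw [hv0] at hmk; linarith⟩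
    have hhalf : ∀ k : Fin r, 1/2 ≤ |v k| := by
      intro k
      obtain ⟨mk, hmk⟩ := hkey k
      have : (1:ℝ) ≤ |2 * v k| := by
        rw [hmk]
        rcases (by omega : mk ≤ 0 ∨ 1 ≤ mk) with h | h
        · have : (mk:ℝ) ≤ 0 := by exact_mod_cast h
          rw [abs_of_nonpos (by linarith)]; linarith
        · have : (1:ℝ) ≤ (mk:ℝ) := by exact_mod_cast h
          rw [abs_of_nonneg (by linarith)]; linarith
      rw [abs_mul] at this
      have h2abs : |(2:ℝ)| = 2 := by norm_num
      rw [h2abs] at this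
      linarith
    have hval : ∀ k : Fin r, |v k| ≤ 1/2 → v k = 1/2 ∨ v k = -1/2 := by
      intro k hvk
      have := hhalf k
      have habs : |v k| = 1/2 := le_antisymm hvk this
      rcases abs_cases (v k) with ⟨he, _⟩ | ⟨he, _⟩
      · left; linarith
      · right; linarith
    have hcard : ({i0, i1} : Finset (Fin r))ᶜ.card = r - 2 := by
      rw [Finset.card_compl, Finset.card_pair h01]
      simp
    have hSlb : ((r:ℝ) - 2) * (1/2) ≤ S := by
      have h := Finset.card_nsmul_le_sum (({i0, i1} : Finset (Fin r))ᶜ)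
        (fun k => |v k|) (1/2 : ℝ) (fun k _ => hhalf k)
      rw [hcard, nsmul_eq_mul] at h
      have hc : ((r - 2 : ℕ) : ℝ) = (r:ℝ) - 2 := by
        have : (2:ℕ) ≤ r := by omega
        push_cast [Nat.cast_sub this]
        ring
      rw [hc] at h
      exact h
    have hr4 : r ≤ 4 := by
      have : (r:ℝ) ≤ 4 := by linarith
      exact_mod_cast this
    have hr34 : r = 3 ∨ r = 4 := by omega
    rcases hr34 with rfl | rfl
    · -- r = 3
      set k2 : Fin 3 := ⟨2, by omega⟩ with hk2
      have hcompl3 : ({i0, i1} : Finset (Fin 3))ᶜ = {k2} := by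
        rw [hi0, hi1, hk2]
        ext k
        have hk := k.isLt
        simp only [Finset.mem_compl, Finset.mem_insert, Finset.mem_singleton, Fin.ext_iff]
        omega
      have hS3 : S = |v k2| := by rw [hS, hcompl3, Finset.sum_singleton]
      have hvk2' : |v k2| ≤ 1 := by linarith [hS3 ▸ hSle]
      obtain ⟨mk, hmk⟩ := hkey k2
      have hmkb : mk = 0 ∨ mk = 1 := by
        have hub' : 2 * (mk:ℝ) - 1 ≤ 2 := by
          have := le_abs_self (2 * v k2)
          rw [abs_mul] at this
          have h2abs : |(2:ℝ)| = 2 := by norm_num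
          rw [h2abs] at this
          linarith
        have hlb' : (-2:ℝ) ≤ 2 * (mk:ℝ) - 1 := by
          have := neg_abs_le (2 * v k2)
          rw [abs_mul] at this
          have h2abs : |(2:ℝ)| = 2 := by norm_num
          rw [h2abs] at this
          linarith
        have : 2 * mk - 1 ≤ 2 := by exact_mod_cast hub'
        have : (-2:ℤ) ≤ 2 * mk - 1 := by exact_mod_cast hlb'
        omega
      have h02 : i0 ≠ k2 := by rw [hi0, hk2]; simp only [Ne, Fin.mk.injEq]; norm_num
      have h12 : i1 ≠ k2 := by rw [hi1, hk2]; simp only [Ne, Fin.mk.injEq]; norm_num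
      have hfin : ∀ k : Fin 3, k = i0 ∨ k = i1 ∨ k = k2 := by
        intro k
        rw [hi0, hi1, hk2]
        have := k.2
        simp only [Fin.ext_iff]
        omega
      refine Or.inr (Or.inr (Or.inr ⟨rfl, -(2 * v k2), ?_, ?_⟩))
      · rcases hmkb with rfl | rfl <;> [left; right] <;> push_cast at hmk <;> linarith
      · have hv0' : v (0 : Fin 3) = -1/2 := hv0
        have hv1' : v (1 : Fin 3) = -1/2 := hv1
        funext k
        rcases hfin k with rfl | rfl | rfl <;>
          simp [hi0, hi1, hk2, b, Pi.single_apply, hv0', hv1'] <;> ring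
    · -- r = 4
      set k2 : Fin 4 := ⟨2, by omega⟩ with hk2
      set k3 : Fin 4 := ⟨3, by omega⟩ with hk3
      have h23 : k2 ≠ k3 := by rw [hk2, hk3]; simp only [Ne, Fin.mk.injEq]; norm_num
      have hcompl4 : ({i0, i1} : Finset (Fin 4))ᶜ = {k2, k3} := by
        rw [hi0, hi1, hk2, hk3]
        ext k
        have hk := k.isLt
        simp only [Finset.mem_compl, Finset.mem_insert, Finset.mem_singleton, Fin.ext_iff]
        omega
      have hS4 : S = |v k2| + |v k3| := by
        rw [hS, hcompl4, Finset.sum_pair h23]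
      have hle2 : |v k2| ≤ 1/2 := by
        have := hhalf k3; rw [hS4] at hSle; linarith
      have hle3 : |v k3| ≤ 1/2 := by
        have := hhalf k2; rw [hS4] at hSle; linarith
      have hv2 := hval k2 hle2
      have hv3 := hval k3 hle3
      have h02 : i0 ≠ k2 := by rw [hi0, hk2]; simp only [Ne, Fin.mk.injEq]; norm_num
      have h12 : i1 ≠ k2 := by rw [hi1, hk2]; simp only [Ne, Fin.mk.injEq]; norm_num
      have h03 : i0 ≠ k3 := by rw [hi0, hk3]; simp only [Ne, Fin.mk.injEq]; norm_num
      have h13 : i1 ≠ k3 := by rw [hi1, hk3]; simp only [Ne, Fin.mk.injEq]; norm_num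
      have hfin : ∀ k : Fin 4, k = i0 ∨ k = i1 ∨ k = k2 ∨ k = k3 := by
        intro k
        rw [hi0, hi1, hk2, hk3]
        have := k.2
        simp only [Fin.ext_iff]
        omega
      refine Or.inr (Or.inr (Or.inl ⟨rfl, -(2 * v k2), -(2 * v k3), ?_, ?_, ?_⟩))
      · rcases hv2 with h | h <;> [right; left] <;> rw [h] <;> norm_num
      · rcases hv3 with h | h <;> [right; left] <;> rw [h] <;> norm_num
      · have hv0' : v (0 : Fin 4) = -1/2 := hv0
        have hv1' : v (1 : Fin 4) = -1/2 := hv1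
        funext k
        rcases hfin k with rfl | rfl | rfl | rfl <;>
          simp [hi0, hi1, hk2, hk3, b, Pi.single_apply, hv0', hv1'] <;> ring
  · -- n0 = 0 : v i0 = 0
    push_cast at hn0
    exact Or.inl (Or.inl (by linarith))
end
end

section
/- Let r ≥ 3. Then the set of weight-lattice points contained in the root polytope, M ∩ Δ, equals {0} ∪ {ε e_i + δ e_j : i ≠ j, ε, δ ∈ {1, −1}} ∪ {e_i, −e_i : 1 ≤ i ≤ r} ∪ H, where H = {(ε_1 e_1 + ⋯ + ε_r e_r)/2 : ε_1, …, ε_r ∈ {1, −1}} if r ∈ {3, 4} and H = ∅ if r ≥ 5. -/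
noncomputable section

/-!
The polytope `Δ` lies in the convex set `{x | ∑ |xᵢ| ≤ 2, |xᵢ| ≤ 1}`, since every root does, and
a point of `M` has either all coordinates in `ℤ` or all in `ℤ + 1/2`. In the first case the
coordinates lie in `{-1, 0, 1}` with at most two of them nonzero, which gives `0`, `±eᵢ` and the
roots. In the second case every `|xᵢ| = 1/2`, so `r / 2 ≤ 2` forces `r ≤ 4`. Conversely, each listed
point is the midpoint of two points of `Δ`: `±eᵢ = ½((±eᵢ + eⱼ) + (±eᵢ - eⱼ))`, and
`½ ∑ εᵢeᵢ` is the midpoint of `ε₁e₁ + ε₂e₂` and `ε₃e₃` (`r = 3`) or `ε₃e₃ + ε₄e₄` (`r = 4`).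
-/

open Finset

lemma sum_smul_b (r : ℕ) (f : Fin r → ℝ) : ∑ i, f i • b r i = f := by
  funext j
  simp [b, Pi.single_apply, Finset.sum_apply]

lemma b_mem_MBD (r : ℕ) (i : Fin r) : b r i ∈ MBD r :=
  AddSubgroup.subset_closure (Or.inl ⟨i, rfl⟩)

lemma smul_b_mem_MBD {r : ℕ} (i : Fin r) {ε : ℝ} (hε : ε = 1 ∨ ε = -1) : ε • b r i ∈ MBD r := by
  rcases hε with rfl | rfl
  · simpa using b_mem_MBD r i
  · simpa using neg_mem (b_mem_MBD r i)

lemma mem_MBD_of_forall_int {r : ℕ} {x : Fin r → ℝ} (hx : ∀ i, ∃ n : ℤ, x i = n) :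
    x ∈ MBD r := by
  choose n hn using hx
  rw [← sum_smul_b r x]
  refine AddSubgroup.sum_mem _ fun i _ => ?_
  rw [hn i, Int.cast_smul_eq_zsmul]
  exact zsmul_mem (b_mem_MBD r i) _

lemma mem_MBD_of_forall_int_add_half {r : ℕ} {x : Fin r → ℝ}
    (hx : ∀ i, ∃ n : ℤ, x i = n + 1 / 2) : x ∈ MBD r := by
  have hint : x - (fun _ => 1 / 2) ∈ MBD r :=
    mem_MBD_of_forall_int fun i => (hx i).imp fun n hn => by simp [hn]
  simpa using add_mem hint (AddSubgroup.subset_closure (Or.inr rfl))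

lemma exists_forall_apply_eq_int_add_div_two_of_mem_MBD {r : ℕ} {x : Fin r → ℝ} (hx : x ∈ MBD r) :
    ∃ t : ℤ, ∀ i, ∃ n : ℤ, x i = n + t / 2 := by
  induction hx using AddSubgroup.closure_induction with
  | mem v hv =>
    rcases hv with ⟨j, rfl⟩ | rfl
    · exact ⟨0, fun i => ⟨if i = j then 1 else 0, by simp [b, Pi.single_apply]⟩⟩
    · exact ⟨1, fun i => ⟨0, by simp⟩⟩
  | zero => exact ⟨0, fun _ => ⟨0, by simp⟩⟩
  | add v w _ _ hv hw =>
    obtain ⟨s, hv⟩ := hv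
    obtain ⟨t, hw⟩ := hw
    refine ⟨s + t, fun i => ?_⟩
    obtain ⟨m, hm⟩ := hv i
    obtain ⟨n, hn⟩ := hw i
    exact ⟨m + n, by push_cast [Pi.add_apply, hm, hn]; ring⟩
  | neg v _ hv =>
    obtain ⟨t, hv⟩ := hv
    refine ⟨-t, fun i => ?_⟩
    obtain ⟨n, hn⟩ := hv i
    exact ⟨-n, by push_cast [Pi.neg_apply, hn]; ring⟩

lemma mem_MBD_iff {r : ℕ} {x : Fin r → ℝ} :
    x ∈ MBD r ↔ (∀ i, ∃ n : ℤ, x i = n) ∨ (∀ i, ∃ n : ℤ, x i = n + 1 / 2) := by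
  refine ⟨fun hx => ?_, fun hx => hx.elim mem_MBD_of_forall_int mem_MBD_of_forall_int_add_half⟩
  obtain ⟨t, ht⟩ := exists_forall_apply_eq_int_add_div_two_of_mem_MBD hx
  obtain ⟨k, rfl | rfl⟩ := Int.even_or_odd' t
  · exact Or.inl fun i => (ht i).imp' (· + k) fun n hn => by rw [hn]; push_cast; ring
  · exact Or.inr fun i => (ht i).imp' (· + k) fun n hn => by rw [hn]; push_cast; ring

lemma convex_setOf_sum_abs_le {ι : Type*} [Fintype ι] (R : ℝ) :
    Convex ℝ {x : ι → ℝ | ∑ i, |x i| ≤ R} := by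
  have hℓ1 : {x : ι → ℝ | ∑ i, |x i| ≤ R} =
      (WithLp.linearEquiv 1 ℝ (ι → ℝ)).symm ⁻¹' Metric.closedBall 0 R := by
    ext x
    simp [PiLp.norm_eq_of_L1]
  rw [hℓ1]
  exact (convex_closedBall _ R).linear_preimage _

lemma abs_smul_b_add_smul_b_apply {r : ℕ} {i j : Fin r} (hij : i ≠ j) {ε δ : ℝ}
    (hε : |ε| = 1) (hδ : |δ| = 1) (k : Fin r) :
    |(ε • b r i + δ • b r j) k| = b r i k + b r j k := by
  rcases eq_or_ne k i with rfl | hki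
  · simp [b, hij, hε]
  rcases eq_or_ne k j with rfl | hkj
  · simp [b, hki, hδ]
  · simp [b, hki, hkj]

lemma rootsBD_subset (r : ℕ) :
    rootsBD r ⊆ {x | ∑ i, |x i| ≤ 2} ∩ Metric.closedBall 0 1 := by
  rintro _ ⟨i, j, ε, δ, hij, hε, hδ, rfl⟩
  have habs := abs_smul_b_add_smul_b_apply hij ((abs_eq zero_le_one).2 hε)
    ((abs_eq zero_le_one).2 hδ)
  refine ⟨?_, mem_closedBall_zero_iff.2 <| (pi_norm_le_iff_of_nonneg zero_le_one).2 fun k => ?_⟩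
  · simp only [Set.mem_ofPred_eq, habs, sum_add_distrib]
    simp [b]
    norm_num
  · rw [Real.norm_eq_abs, habs]
    rcases eq_or_ne k i with rfl | hki
    · simp [b, hij]
    · simp [b, hki, Pi.single_apply, ite_le_one]

lemma DeltaBD_subset (r : ℕ) : DeltaBD r ⊆ {x | ∑ i, |x i| ≤ 2 ∧ ∀ i, |x i| ≤ 1} := by
  refine (convexHull_min (rootsBD_subset r)
    ((convex_setOf_sum_abs_le 2).inter (convex_closedBall 0 1))).trans ?_
  rintro x ⟨hsum, hball⟩
  exact ⟨hsum, fun i => (norm_le_pi_norm x i).trans (mem_closedBall_zero_iff.1 hball)⟩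

lemma half_smul_add_mem_DeltaBD {r : ℕ} {x y : Fin r → ℝ} (hx : x ∈ DeltaBD r)
    (hy : y ∈ DeltaBD r) : (1 / 2 : ℝ) • (x + y) ∈ DeltaBD r := by
  rw [smul_add]
  exact convex_convexHull ℝ _ hx hy (by norm_num) (by norm_num) (by norm_num)

lemma smul_b_add_smul_b_mem_DeltaBD {r : ℕ} {i j : Fin r} (hij : i ≠ j) {ε δ : ℝ}
    (hε : ε = 1 ∨ ε = -1) (hδ : δ = 1 ∨ δ = -1) : ε • b r i + δ • b r j ∈ DeltaBD r :=
  subset_convexHull ℝ _ ⟨i, j, ε, δ, hij, hε, hδ, rfl⟩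

lemma smul_b_mem_DeltaBD {r : ℕ} (hr : 2 ≤ r) (i : Fin r) {ε : ℝ} (hε : ε = 1 ∨ ε = -1) :
    ε • b r i ∈ DeltaBD r := by
  have : Nontrivial (Fin r) := Fin.nontrivial_iff_two_le.2 hr
  obtain ⟨j, hji⟩ := exists_ne i
  convert half_smul_add_mem_DeltaBD (smul_b_add_smul_b_mem_DeltaBD hji.symm hε (Or.inl rfl))
    (smul_b_add_smul_b_mem_DeltaBD hji.symm hε (Or.inr rfl)) using 1
  module

lemma zero_mem_DeltaBD {r : ℕ} (hr : 2 ≤ r) : (0 : Fin r → ℝ) ∈ DeltaBD r := by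
  have i : Fin r := ⟨0, by omega⟩
  convert half_smul_add_mem_DeltaBD (smul_b_mem_DeltaBD hr i (Or.inl rfl))
    (smul_b_mem_DeltaBD hr i (Or.inr rfl)) using 1
  module

lemma half_smul_sum_mem_DeltaBD_three {ε : Fin 3 → ℝ} (hε : ∀ i, ε i = 1 ∨ ε i = -1) :
    (1 / 2 : ℝ) • ∑ i, ε i • b 3 i ∈ DeltaBD 3 := by
  rw [Fin.sum_univ_three]
  exact half_smul_add_mem_DeltaBD (smul_b_add_smul_b_mem_DeltaBD (by decide) (hε 0) (hε 1))
    (smul_b_mem_DeltaBD (by norm_num) 2 (hε 2))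

lemma half_smul_sum_mem_DeltaBD_four {ε : Fin 4 → ℝ} (hε : ∀ i, ε i = 1 ∨ ε i = -1) :
    (1 / 2 : ℝ) • ∑ i, ε i • b 4 i ∈ DeltaBD 4 := by
  rw [Fin.sum_univ_four, add_assoc]
  exact half_smul_add_mem_DeltaBD (smul_b_add_smul_b_mem_DeltaBD (by decide) (hε 0) (hε 1))
    (smul_b_add_smul_b_mem_DeltaBD (by decide) (hε 2) (hε 3))

lemma abs_intCast_eq_one {n : ℤ} (h : |(n : ℝ)| ≤ 1) (h0 : (n : ℝ) ≠ 0) : |(n : ℝ)| = 1 := by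
  rw [← Int.cast_abs] at h ⊢
  exact_mod_cast le_antisymm (by exact_mod_cast h) (Int.one_le_abs (by simpa using h0))

lemma eq_sum_filter_ne_zero_smul_b {r : ℕ} (x : Fin r → ℝ) :
    x = ∑ i ∈ univ.filter (x · ≠ 0), x i • b r i := by
  rw [sum_filter_of_ne fun i _ h => left_ne_zero_of_smul h, sum_smul_b]

lemma eq_zero_or_mem_rootsBD_or_eq_pm_b {r : ℕ} {x : Fin r → ℝ} (hint : ∀ i, ∃ n : ℤ, x i = n)
    (hsum : ∑ i, |x i| ≤ 2) (hmax : ∀ i, |x i| ≤ 1) :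
    x = 0 ∨ x ∈ rootsBD r ∨ ∃ i, x = b r i ∨ x = -b r i := by
  set S := univ.filter (x · ≠ 0)
  have habs : ∀ i ∈ S, |x i| = 1 := fun i hi => by
    obtain ⟨n, hn⟩ := hint i
    rw [hn]
    exact abs_intCast_eq_one (hn ▸ hmax i) (hn ▸ (mem_filter.1 hi).2)
  have hsign : ∀ i ∈ S, x i = 1 ∨ x i = -1 := fun i hi => (abs_eq zero_le_one).1 (habs i hi)
  have hcard : #S ≤ 2 := by
    have : (#S : ℝ) ≤ 2 := calc
      (#S : ℝ) = ∑ i ∈ S, |x i| := by rw [sum_congr rfl habs]; simp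
      _ = ∑ i, |x i| := sum_filter_of_ne fun i _ h => abs_ne_zero.1 h
      _ ≤ 2 := hsum
    exact_mod_cast this
  have hx : x = ∑ i ∈ S, x i • b r i := eq_sum_filter_ne_zero_smul_b x
  obtain hS | hS | hS : #S = 0 ∨ #S = 1 ∨ #S = 2 := by omega
  · left
    rwa [card_eq_zero.1 hS, sum_empty] at hx
  · obtain ⟨i, hSi⟩ := card_eq_one.1 hS
    rw [hSi, sum_singleton] at hx
    right; right
    refine ⟨i, (hsign i (hSi ▸ mem_singleton_self i)).imp (fun h => ?_) fun h => ?_⟩ <;>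
      simpa [h] using hx
  · obtain ⟨i, j, hij, hSij⟩ := card_eq_two.1 hS
    rw [hSij, sum_pair hij] at hx
    exact Or.inr (Or.inl ⟨i, j, x i, x j, hij, hsign i (by simp [hSij]),
      hsign j (by simp [hSij]), hx⟩)

lemma eq_half_of_abs_intCast_add_half_le_one {n : ℤ} (h : |(n : ℝ) + 1 / 2| ≤ 1) :
    |(n : ℝ) + 1 / 2| = 1 / 2 := by
  rw [abs_le] at h
  have h1 : n < 1 := by exact_mod_cast (by linarith : (n : ℝ) < 1)
  have h2 : -2 < n := by exact_mod_cast (by linarith : (-2 : ℝ) < n)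
  obtain rfl | rfl : n = 0 ∨ n = -1 := by omega
  all_goals norm_num

lemma le_four_and_eq_half_smul_sum_of_forall_int_add_half {r : ℕ} {x : Fin r → ℝ}
    (hhalf : ∀ i, ∃ n : ℤ, x i = n + 1 / 2) (hsum : ∑ i, |x i| ≤ 2) (hmax : ∀ i, |x i| ≤ 1) :
    r ≤ 4 ∧ ∃ ε : Fin r → ℝ, (∀ i, ε i = 1 ∨ ε i = -1) ∧ x = (1 / 2 : ℝ) • ∑ i, ε i • b r i := by
  have habs : ∀ i, |x i| = 1 / 2 := fun i => by
    obtain ⟨n, hn⟩ := hhalf i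
    rw [hn]
    exact eq_half_of_abs_intCast_add_half_le_one (hn ▸ hmax i)
  refine ⟨?_, (2 : ℝ) • x, fun i => ?_, ?_⟩
  · have : (r : ℝ) / 2 ≤ 2 := by simpa [habs, div_eq_mul_inv] using hsum
    have : (r : ℝ) ≤ 4 := by linarith
    exact_mod_cast this
  · rcases (abs_eq (by norm_num)).1 (habs i) with h | h <;> simp [h]
  · rw [sum_smul_b, smul_smul]; norm_num

lemma half_smul_sum_mem_MBD {r : ℕ} {ε : Fin r → ℝ} (hε : ∀ i, ε i = 1 ∨ ε i = -1) :
    (1 / 2 : ℝ) • ∑ i, ε i • b r i ∈ MBD r := by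
  rw [sum_smul_b]
  refine mem_MBD_of_forall_int_add_half fun i => ?_
  rcases hε i with h | h
  · exact ⟨0, by simp [h]⟩
  · exact ⟨-1, by simp [h]; norm_num⟩

theorem stmt2 (r : ℕ) (hr : 3 ≤ r) :
    (MBD r : Set (Fin r → ℝ)) ∩ DeltaBD r =
      {0} ∪ rootsBD r ∪ {v | ∃ i : Fin r, v = b r i ∨ v = -b r i} ∪
        (if r = 3 ∨ r = 4 then
          {v | ∃ ε : Fin r → ℝ, (∀ i, ε i = 1 ∨ ε i = -1) ∧
            v = (1 / 2 : ℝ) • ∑ i, ε i • b r i}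
        else ∅) := by
  ext x
  simp only [Set.mem_inter_iff, Set.mem_union, Set.mem_singleton_iff, SetLike.mem_coe]
  constructor
  · rintro ⟨hM, hΔ⟩
    obtain ⟨hsum, hmax⟩ := DeltaBD_subset r hΔ
    rcases mem_MBD_iff.1 hM with hint | hhalf
    · rcases eq_zero_or_mem_rootsBD_or_eq_pm_b hint hsum hmax with h | h | h <;> simp [h]
    · obtain ⟨hr4, hH⟩ := le_four_and_eq_half_smul_sum_of_forall_int_add_half hhalf hsum hmax
      exact Or.inr (by rwa [if_pos (by omega)])
  · rintro (((rfl | ⟨i, j, ε, δ, hij, hε, hδ, rfl⟩) | ⟨i, rfl | rfl⟩) | hH)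
    · exact ⟨zero_mem _, zero_mem_DeltaBD (by omega)⟩
    · exact ⟨add_mem (smul_b_mem_MBD i hε) (smul_b_mem_MBD j hδ),
        smul_b_add_smul_b_mem_DeltaBD hij hε hδ⟩
    · exact ⟨b_mem_MBD r i, by simpa using smul_b_mem_DeltaBD (by omega) i (ε := 1) (Or.inl rfl)⟩
    · exact ⟨neg_mem (b_mem_MBD r i),
        by simpa using smul_b_mem_DeltaBD (by omega) i (ε := -1) (Or.inr rfl)⟩
    · split_ifs at hH with hr34
      · obtain ⟨ε, hε, rfl⟩ := hH
        refine ⟨half_smul_sum_mem_MBD hε, ?_⟩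
        rcases hr34 with rfl | rfl
        · exact half_smul_sum_mem_DeltaBD_three hε
        · exact half_smul_sum_mem_DeltaBD_four hε
      · exact hH.elim
end
end

section
/- For every r ≥ 2, the convex hull of the vectors ε e_i + δ e_j (i ≠ j, ε, δ ∈ {1, −1}) in ℝ^r equals the set {x ∈ ℝ^r : |x_i| ≤ 1 for all i, and |x_1| + |x_2| + ⋯ + |x_r| ≤ 2}. -/
noncomputable section

lemma b_apply (r : ℕ) (i k : Fin r) : b r i k = if k = i then 1 else 0 := by
  simp [b, Pi.single_apply]

lemma sum_b (r : ℕ) (i : Fin r) : ∑ k, b r i k = 1 := by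
  simp [b, Fintype.sum_pi_single']

-- pointwise abs formula for a root
lemma root_abs (r : ℕ) {i j : Fin r} (hij : i ≠ j) {ε δ : ℝ}
    (hε : ε = 1 ∨ ε = -1) (hδ : δ = 1 ∨ δ = -1) (k : Fin r) :
    |(ε • b r i + δ • b r j) k| = b r i k + b r j k := by
  have hε1 : |ε| = 1 := by rcases hε with h | h <;> simp [h]
  have hδ1 : |δ| = 1 := by rcases hδ with h | h <;> simp [h]
  simp only [Pi.add_apply, Pi.smul_apply, smul_eq_mul, b_apply]
  rcases eq_or_ne k i with rfl | hki
  · rw [if_pos rfl, if_neg hij]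
    simpa using hε1
  · rw [if_neg hki]
    rcases eq_or_ne k j with rfl | hkj
    · simpa using hδ1
    · simp [hkj]

lemma roots_subset (r : ℕ) :
    rootsBD r ⊆ {x : Fin r → ℝ | (∀ i, |x i| ≤ 1) ∧ ∑ i, |x i| ≤ 2} := by
  rintro v ⟨i, j, ε, δ, hij, hε, hδ, rfl⟩
  constructor
  · intro k
    rw [root_abs r hij hε hδ k, b_apply, b_apply]
    rcases eq_or_ne k i with rfl | h1 <;> rcases eq_or_ne k j with rfl | h2 <;>
      simp_all
  · have : ∑ k, |(ε • b r i + δ • b r j) k| = ∑ k, (b r i k + b r j k) :=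
      Finset.sum_congr rfl fun k _ => root_abs r hij hε hδ k
    rw [this, Finset.sum_add_distrib, sum_b, sum_b]
    norm_num

lemma target_convex (r : ℕ) :
    Convex ℝ {x : Fin r → ℝ | (∀ i, |x i| ≤ 1) ∧ ∑ i, |x i| ≤ 2} := by
  rintro x ⟨hx1, hx2⟩ y ⟨hy1, hy2⟩ a c ha hc hac
  have key : ∀ i, |(a • x + c • y) i| ≤ a * |x i| + c * |y i| := by
    intro i
    simp only [Pi.add_apply, Pi.smul_apply, smul_eq_mul]
    calc |a * x i + c * y i| ≤ |a * x i| + |c * y i| := abs_add_le _ _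
      _ = a * |x i| + c * |y i| := by
          rw [abs_mul, abs_mul, abs_of_nonneg ha, abs_of_nonneg hc]
  constructor
  · intro i
    calc |(a • x + c • y) i| ≤ a * |x i| + c * |y i| := key i
      _ ≤ a * 1 + c * 1 := by
          gcongr
          · exact hx1 i
          · exact hy1 i
      _ = 1 := by rw [mul_one, mul_one, hac]
  · calc ∑ i, |(a • x + c • y) i| ≤ ∑ i, (a * |x i| + c * |y i|) :=
        Finset.sum_le_sum fun i _ => key i
      _ = a * ∑ i, |x i| + c * ∑ i, |y i| := by
          rw [Finset.sum_add_distrib, Finset.mul_sum, Finset.mul_sum]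
      _ ≤ a * 2 + c * 2 := by gcongr
      _ = 2 := by linarith

/-- Generators: `0`, `e_i`, and `e_i + e_j`. -/
def GenBD (r : ℕ) : Set (Fin r → ℝ) :=
  {0} ∪ {v | ∃ i, v = b r i} ∪ {v | ∃ i j, i ≠ j ∧ v = b r i + b r j}

lemma root_mem_hull (r : ℕ) {i j : Fin r} (hij : i ≠ j) {ε δ : ℝ}
    (hε : ε = 1 ∨ ε = -1) (hδ : δ = 1 ∨ δ = -1) :
    ε • b r i + δ • b r j ∈ DeltaBD r :=
  subset_convexHull ℝ _ ⟨i, j, ε, δ, hij, hε, hδ, rfl⟩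

lemma gen_subset_hull (r : ℕ) (hr : 2 ≤ r) : GenBD r ⊆ DeltaBD r := by
  have hconv : Convex ℝ (DeltaBD r) := convex_convexHull ℝ _
  haveI : Nontrivial (Fin r) := Fin.nontrivial_iff_two_le.mpr hr
  rintro v ((rfl | ⟨i, rfl⟩) | ⟨i, j, hij, rfl⟩)
  · obtain ⟨i, j, hij⟩ := exists_pair_ne (Fin r)
    have h1 := root_mem_hull r hij (Or.inl rfl) (Or.inl rfl)
    have h2 := root_mem_hull r hij (Or.inr rfl) (Or.inr rfl)
    have := hconv h1 h2 (by norm_num : (0:ℝ) ≤ 1/2) (by norm_num : (0:ℝ) ≤ 1/2)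
      (by norm_num)
    convert this using 1
    module
  · obtain ⟨j, hj⟩ := exists_ne i
    have h1 := root_mem_hull r (Ne.symm hj) (Or.inl rfl) (Or.inl rfl)
    have h2 := root_mem_hull r (Ne.symm hj) (Or.inl rfl) (Or.inr rfl)
    have := hconv h1 h2 (by norm_num : (0:ℝ) ≤ 1/2) (by norm_num : (0:ℝ) ≤ 1/2)
      (by norm_num)
    convert this using 1
    module
  · have := root_mem_hull r hij (Or.inl rfl) (Or.inl rfl)
    convert this using 1
    module

lemma comb_mem {r : ℕ} {s : Set (Fin r → ℝ)} {u v y : Fin r → ℝ}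
    (hu : u ∈ convexHull ℝ s) (hv : v ∈ convexHull ℝ s) {a c : ℝ}
    (ha : 0 ≤ a) (hc : 0 ≤ c) (hac : a + c = 1) (h : a • u + c • v = y) :
    y ∈ convexHull ℝ s :=
  h ▸ (convex_convexHull ℝ s) hu hv ha hc hac

/-- The case where every coordinate is 0 or 1. -/
lemma core_bool (r : ℕ) (y : Fin r → ℝ) (h01 : ∀ i, y i = 0 ∨ y i = 1)
    (hsum : ∑ i, y i ≤ 2) : y ∈ GenBD r := by
  classical
  set T : Finset (Fin r) := Finset.univ.filter (fun i => y i = 1) with hT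
  have hyT : ∀ i, y i = if i ∈ T then 1 else 0 := by
    intro i
    rcases h01 i with h0 | h1
    · have hni : i ∉ T := by simp [hT, h0]
      rw [if_neg hni, h0]
    · have hmi : i ∈ T := by simp [hT, h1]
      rw [if_pos hmi, h1]
  have hsumT : (T.card : ℝ) ≤ 2 := by
    have : ∑ i, y i = T.card := by
      rw [Finset.sum_congr rfl (fun i _ => hyT i)]
      simp
    linarith [this ▸ hsum]
  have hcard : T.card ≤ 2 := by exact_mod_cast hsumT
  interval_cases h : T.card
  · have hTe : T = ∅ := Finset.card_eq_zero.mp h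
    left; left
    have : y = 0 := by funext k; rw [hyT k, hTe]; simp
    simp [this]
  · obtain ⟨i, hi⟩ := Finset.card_eq_one.mp h
    left; right
    refine ⟨i, ?_⟩
    funext k
    rw [hyT k, hi, b_apply]
    simp [Finset.mem_singleton]
  · obtain ⟨i, j, hij, hijT⟩ := Finset.card_eq_two.mp h
    right
    refine ⟨i, j, hij, ?_⟩
    funext k
    rw [hyT k, hijT]
    simp only [Pi.add_apply, b_apply]
    rcases eq_or_ne k i with rfl | h1 <;> rcases eq_or_ne k j with rfl | h2
    · exact absurd rfl hij
    · simp [Finset.mem_insert, h2]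
    · simp [Finset.mem_insert, Finset.mem_singleton, h1]
    · simp [Finset.mem_insert, Finset.mem_singleton, h1, h2]

lemma zero_mem_gen (r : ℕ) : (0 : Fin r → ℝ) ∈ GenBD r := Or.inl (Or.inl rfl)
lemma b_mem_gen (r : ℕ) (i : Fin r) : b r i ∈ GenBD r := Or.inl (Or.inr ⟨i, rfl⟩)
lemma bb_mem_gen (r : ℕ) {i j : Fin r} (h : i ≠ j) : b r i + b r j ∈ GenBD r :=
  Or.inr ⟨i, j, h, rfl⟩

/-- The case where exactly one coordinate is fractional. -/
lemma core_one (r : ℕ) (y : Fin r → ℝ) (hy0 : ∀ i, 0 ≤ y i) (hy1 : ∀ i, y i ≤ 1)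
    (hsum : ∑ i, y i ≤ 2) (i : Fin r) (hi0 : y i ≠ 0) (hi1 : y i ≠ 1)
    (hother : ∀ k, k ≠ i → y k = 0 ∨ y k = 1) :
    y ∈ convexHull ℝ (GenBD r) := by
  classical
  have hipos : 0 < y i := lt_of_le_of_ne (hy0 i) (Ne.symm hi0)
  set T : Finset (Fin r) := Finset.univ.filter (fun k => y k = 1) with hT
  have hiT : i ∉ T := by simp [hT, hi1]
  have hcard : T.card ≤ 1 := by
    by_contra h
    push_neg at h
    obtain ⟨j, hj, k, hk, hjk⟩ := Finset.one_lt_card.mp h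
    have hyj : y j = 1 := (Finset.mem_filter.mp hj).2
    have hyk : y k = 1 := (Finset.mem_filter.mp hk).2
    have hij : i ≠ j := by rintro rfl; exact hi1 hyj
    have hik : i ≠ k := by rintro rfl; exact hi1 hyk
    have hs3 : ∑ l ∈ ({i, j, k} : Finset (Fin r)), y l = y i + y j + y k := by
      rw [Finset.sum_insert (by simp [hij, hik]),
        Finset.sum_insert (by simp [hjk]), Finset.sum_singleton, add_assoc]
    have hle : ∑ l ∈ ({i, j, k} : Finset (Fin r)), y l ≤ ∑ l, y l :=
      Finset.sum_le_sum_of_subset_of_nonneg (Finset.subset_univ _)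
        (fun l _ _ => hy0 l)
    rw [hs3, hyj, hyk] at hle
    linarith
  interval_cases h : T.card
  · -- no coordinate equal to 1
    have hzero : ∀ k, k ≠ i → y k = 0 := by
      intro k hk
      rcases hother k hk with h0 | h1
      · exact h0
      · exact absurd (by simp [hT, h1] : k ∈ T) (by rw [Finset.card_eq_zero.mp h]; simp)
    refine comb_mem (a := 1 - y i) (c := y i)
      (subset_convexHull ℝ _ (zero_mem_gen r))
      (subset_convexHull ℝ _ (b_mem_gen r i)) (by linarith [hy1 i])
      (le_of_lt hipos) (by ring) ?_
    funext k
    simp only [Pi.add_apply, Pi.smul_apply, smul_eq_mul, b_apply, Pi.zero_apply]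
    rcases eq_or_ne k i with rfl | hk
    · simp
    · simp [hk, hzero k hk]
  · -- exactly one coordinate equal to 1
    obtain ⟨j, hj⟩ := Finset.card_eq_one.mp h
    have hyj : y j = 1 := by
      have : j ∈ T := hj ▸ Finset.mem_singleton_self j
      exact (Finset.mem_filter.mp this).2
    have hij : i ≠ j := by rintro rfl; exact hi1 hyj
    have hzero : ∀ k, k ≠ i → k ≠ j → y k = 0 := by
      intro k hk hkj
      rcases hother k hk with h0 | h1
      · exact h0
      · exact absurd ((hj ▸ (by simp [hT, h1] : k ∈ T)) : k ∈ ({j} : Finset _))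
          (by simp [hkj])
    refine comb_mem (a := 1 - y i) (c := y i)
      (subset_convexHull ℝ _ (b_mem_gen r j))
      (subset_convexHull ℝ _ (bb_mem_gen r hij)) (by linarith [hy1 i])
      (le_of_lt hipos) (by ring) ?_
    funext k
    simp only [Pi.add_apply, Pi.smul_apply, smul_eq_mul, b_apply]
    rcases eq_or_ne k i with rfl | hk
    · rw [if_pos rfl, if_neg hij]
      ring
    · rcases eq_or_ne k j with rfl | hkj
      · rw [if_pos rfl, if_neg hk, hyj]
        ring
      · simp [hk, hkj, hzero k hk hkj]

/-- Moving a point of the polytope along `e_i - e_j` until a coordinate hits the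
boundary decreases the number of fractional coordinates. -/
lemma perturb (r : ℕ) (m : ℕ)
    (ih : ∀ z : Fin r → ℝ, (∀ i, 0 ≤ z i) → (∀ i, z i ≤ 1) → (∑ i, z i ≤ 2) →
      (Finset.univ.filter (fun i => z i ≠ 0 ∧ z i ≠ 1)).card ≤ m →
      z ∈ convexHull ℝ (GenBD r))
    (y : Fin r → ℝ) (hy0 : ∀ i, 0 ≤ y i) (hy1 : ∀ i, y i ≤ 1) (hsum : ∑ i, y i ≤ 2)
    (i j : Fin r) (hij : i ≠ j)
    (hiF : y i ≠ 0 ∧ y i ≠ 1) (hjF : y j ≠ 0 ∧ y j ≠ 1)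
    (hcard : (Finset.univ.filter (fun i => y i ≠ 0 ∧ y i ≠ 1)).card ≤ m + 1)
    (t : ℝ) (ht : 0 < t) (hti : t ≤ 1 - y i) (htj : t ≤ y j)
    (htmax : t = 1 - y i ∨ t = y j) :
    y + t • (b r i - b r j) ∈ convexHull ℝ (GenBD r) := by
  classical
  set u : Fin r → ℝ := y + t • (b r i - b r j) with hu
  have huk : ∀ k, k ≠ i → k ≠ j → u k = y k := by
    intro k hk hkj
    simp [hu, b_apply, hk, hkj]
  have hui : u i = y i + t := by simp [hu, b_apply, hij]
  have huj : u j = y j - t := by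
    simp [hu, b_apply, Ne.symm hij]
    ring
  have hu0 : ∀ k, 0 ≤ u k := by
    intro k
    rcases eq_or_ne k i with hk | hk
    · rw [hk, hui]; linarith [hy0 i]
    · rcases eq_or_ne k j with hkj | hkj
      · rw [hkj, huj]; linarith
      · rw [huk k hk hkj]; exact hy0 k
  have hu1 : ∀ k, u k ≤ 1 := by
    intro k
    rcases eq_or_ne k i with hk | hk
    · rw [hk, hui]; linarith
    · rcases eq_or_ne k j with hkj | hkj
      · rw [hkj, huj]; linarith [hy1 j]
      · rw [huk k hk hkj]; exact hy1 k
  have husum : ∑ k, u k ≤ 2 := by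
    have : ∑ k, u k = ∑ k, y k + t * (∑ k, b r i k - ∑ k, b r j k) := by
      simp only [hu, Pi.add_apply, Pi.smul_apply, Pi.sub_apply, smul_eq_mul]
      rw [Finset.sum_add_distrib, ← Finset.mul_sum, Finset.sum_sub_distrib]
    rw [this, sum_b, sum_b]
    simpa using hsum
  -- the boundary coordinate
  obtain ⟨k0, hk0F, hk0b⟩ : ∃ k0, (k0 = i ∨ k0 = j) ∧ (u k0 = 0 ∨ u k0 = 1) := by
    rcases htmax with h | h
    · exact ⟨i, Or.inl rfl, Or.inr (by rw [hui, h]; ring)⟩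
    · exact ⟨j, Or.inr rfl, Or.inl (by rw [huj, h]; ring)⟩
  have hk0mem : k0 ∈ Finset.univ.filter (fun k => y k ≠ 0 ∧ y k ≠ 1) := by
    rcases hk0F with rfl | rfl <;> simp [hiF.1, hiF.2, hjF.1, hjF.2]
  have hsub : Finset.univ.filter (fun k => u k ≠ 0 ∧ u k ≠ 1) ⊆
      (Finset.univ.filter (fun k => y k ≠ 0 ∧ y k ≠ 1)).erase k0 := by
    intro k hk
    obtain ⟨hk1, hk2⟩ := (Finset.mem_filter.mp hk).2
    refine Finset.mem_erase.mpr ⟨?_, ?_⟩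
    · rintro rfl
      rcases hk0b with h | h
      · exact hk1 h
      · exact hk2 h
    · rcases eq_or_ne k i with rfl | hki
      · simpa using hiF
      · rcases eq_or_ne k j with rfl | hkj
        · simpa using hjF
        · rw [huk k hki hkj] at hk1 hk2
          simp [hk1, hk2]
  have hcu : (Finset.univ.filter (fun k => u k ≠ 0 ∧ u k ≠ 1)).card ≤ m := by
    have h1 := Finset.card_le_card hsub
    rw [Finset.card_erase_of_mem hk0mem] at h1
    omega
  exact ih u hu0 hu1 husum hcu

lemma core (r : ℕ) (m : ℕ) : ∀ (y : Fin r → ℝ),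
    (∀ i, 0 ≤ y i) → (∀ i, y i ≤ 1) → (∑ i, y i ≤ 2) →
    (Finset.univ.filter (fun i => y i ≠ 0 ∧ y i ≠ 1)).card ≤ m →
    y ∈ convexHull ℝ (GenBD r) := by
  classical
  induction m with
  | zero =>
    intro y hy0 hy1 hsum hc
    have h01 : ∀ i, y i = 0 ∨ y i = 1 := by
      intro i
      by_contra h
      push_neg at h
      have hi : i ∈ Finset.univ.filter (fun i => y i ≠ 0 ∧ y i ≠ 1) := by
        simp [h.1, h.2]
      have := Finset.card_pos.mpr ⟨i, hi⟩
      omega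
    exact subset_convexHull ℝ _ (core_bool r y h01 hsum)
  | succ m ih =>
    intro y hy0 hy1 hsum hc
    by_cases hFm : (Finset.univ.filter (fun i => y i ≠ 0 ∧ y i ≠ 1)).card ≤ m
    · exact ih y hy0 hy1 hsum hFm
    set F := Finset.univ.filter (fun i => y i ≠ 0 ∧ y i ≠ 1) with hF
    have hFne : F.Nonempty := Finset.card_pos.mp (by omega)
    obtain ⟨i, hiF⟩ := hFne
    obtain ⟨hi0, hi1⟩ := (Finset.mem_filter.mp hiF).2
    by_cases hj : ∃ j ∈ F, j ≠ i
    · obtain ⟨j, hjF, hji⟩ := hj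
      obtain ⟨hj0, hj1⟩ := (Finset.mem_filter.mp hjF).2
      have hilt : y i < 1 := lt_of_le_of_ne (hy1 i) hi1
      have hipos : 0 < y i := lt_of_le_of_ne (hy0 i) (Ne.symm hi0)
      have hjlt : y j < 1 := lt_of_le_of_ne (hy1 j) hj1
      have hjpos : 0 < y j := lt_of_le_of_ne (hy0 j) (Ne.symm hj0)
      set t1 := min (1 - y i) (y j) with ht1d
      set t2 := min (y i) (1 - y j) with ht2d
      have ht1 : 0 < t1 := lt_min (by linarith) hjpos
      have ht2 : 0 < t2 := lt_min hipos (by linarith)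
      set d : Fin r → ℝ := b r i - b r j with hd
      have hcard' : F.card ≤ m + 1 := hc
      have hu_mem : y + t1 • (b r i - b r j) ∈ convexHull ℝ (GenBD r) :=
        perturb r m ih y hy0 hy1 hsum i j (Ne.symm hji) ⟨hi0, hi1⟩ ⟨hj0, hj1⟩
          hcard' t1 ht1 (min_le_left _ _) (min_le_right _ _)
          ((min_choice _ _).imp (fun h => h) (fun h => h))
      have hv_mem : y + t2 • (b r j - b r i) ∈ convexHull ℝ (GenBD r) :=
        perturb r m ih y hy0 hy1 hsum j i hji ⟨hj0, hj1⟩ ⟨hi0, hi1⟩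
          hcard' t2 ht2 (by rw [ht2d]; exact min_le_right _ _)
          (by rw [ht2d]; exact min_le_left _ _)
          (by rcases min_choice (y i) (1 - y j) with h | h
              · exact Or.inr (ht2d ▸ h)
              · exact Or.inl (ht2d ▸ h))
      have hsum12 : 0 < t1 + t2 := by linarith
      have hac : t2 / (t1 + t2) + t1 / (t1 + t2) = 1 := by field_simp; ring
      have h0 : t2 / (t1 + t2) * t1 - t1 / (t1 + t2) * t2 = 0 := by
        field_simp; ring
      refine comb_mem (a := t2 / (t1 + t2)) (c := t1 / (t1 + t2)) hu_mem hv_mem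
        (by positivity) (by positivity) hac ?_
      have expand : (t2 / (t1 + t2)) • (y + t1 • (b r i - b r j)) +
          (t1 / (t1 + t2)) • (y + t2 • (b r j - b r i)) =
          (t2 / (t1 + t2) + t1 / (t1 + t2)) • y +
          (t2 / (t1 + t2) * t1 - t1 / (t1 + t2) * t2) • (b r i - b r j) := by
        module
      rw [expand, hac, h0]
      simp
    · apply core_one r y hy0 hy1 hsum i hi0 hi1
      intro k hk
      by_contra h
      push_neg at h
      exact hj ⟨k, by simp [hF, h.1, h.2], hk⟩

theorem stmt3 (r : ℕ) (hr : 2 ≤ r) :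
    DeltaBD r = {x : Fin r → ℝ | (∀ i, |x i| ≤ 1) ∧ ∑ i, |x i| ≤ 2} := by
  apply Set.Subset.antisymm
  · exact convexHull_min (roots_subset r) (target_convex r)
  · rintro x ⟨hx1, hx2⟩
    -- the vector of absolute values lies in the hull of the generators
    have hy : (fun i => |x i|) ∈ convexHull ℝ (GenBD r) :=
      core r r.succ (fun i => |x i|) (fun i => abs_nonneg _) hx1 hx2
        (le_trans (Finset.card_le_card (Finset.subset_univ _)) (by simp))
    have hyD : (fun i => |x i|) ∈ DeltaBD r :=
      convexHull_min (gen_subset_hull r hr) (convex_convexHull ℝ _) hy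
    -- flip signs using a linear map preserving the roots
    set sg : Fin r → ℝ := fun i => if x i < 0 then -1 else 1 with hsg
    have hsgv : ∀ i, sg i = 1 ∨ sg i = -1 := by
      intro i
      by_cases h : x i < 0 <;> simp [hsg, h]
    set T : (Fin r → ℝ) →ₗ[ℝ] (Fin r → ℝ) :=
      LinearMap.pi (fun i => sg i • LinearMap.proj i) with hT
    have hTapp : ∀ (w : Fin r → ℝ) (k : Fin r), T w k = sg k * w k := by
      intro w k
      simp [hT, LinearMap.pi_apply]
    have hTroots : T '' rootsBD r ⊆ rootsBD r := by
      rintro v ⟨w, ⟨i, j, ε, δ, hij, hε, hδ, rfl⟩, rfl⟩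
      refine ⟨i, j, ε * sg i, δ * sg j, hij, ?_, ?_, ?_⟩
      · rcases hε with h | h <;> rcases hsgv i with h' | h' <;> rw [h, h'] <;> norm_num
      · rcases hδ with h | h <;> rcases hsgv j with h' | h' <;> rw [h, h'] <;> norm_num
      · funext k
        rw [hTapp]
        simp only [Pi.add_apply, Pi.smul_apply, smul_eq_mul, b_apply]
        rcases eq_or_ne k i with hk | hk
        · rw [hk, if_pos rfl, if_neg hij]
          ring
        · rcases eq_or_ne k j with hkj | hkj
          · rw [hkj, if_pos rfl, if_neg (Ne.symm hij)]
            ring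
          · rw [if_neg hk, if_neg hkj]
            ring
    have hximage : x = T (fun i => |x i|) := by
      funext k
      rw [hTapp]
      by_cases h : x k < 0
      · simp [hsg, h, abs_of_neg h]
      · simp [hsg, h, abs_of_nonneg (not_lt.mp h)]
    rw [hximage]
    have : T (fun i => |x i|) ∈ T '' (convexHull ℝ (rootsBD r)) :=
      Set.mem_image_of_mem _ hyD
    rw [T.image_convexHull] at this
    show T (fun i => |x i|) ∈ convexHull ℝ (rootsBD r)
    exact convexHull_min (hTroots.trans (subset_convexHull ℝ _))
      (convex_convexHull ℝ _) this
end
end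

section
/- Let V_1 and V_2 be finite-dimensional real vector spaces, let R_1 ⊆ V_1 and R_2 ⊆ V_2 be finite sets, let Δ_i be the convex hull of R_i, and assume 0 ∈ Δ_i for i = 1, 2. Let u_1 ≠ 0 be an extreme point of Δ_1 and u_2 ≠ 0 an extreme point of Δ_2. In V_1 × V_2, let P be the convex hull of (R_1 × {0}) ∪ ({0} × R_2), let C be the convex cone generated by P − (u_1, 0), and let w = (−u_1, u_2). Then the ray {t·w : t ≥ 0} is an extreme subset (a face) of C: it is contained in C, and whenever a point of the ray lies in the open segment joining two points of C, both of those points belong to the ray. -/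
/-!
A generator `(θ • x - u₁, (1 - θ) • y)` of the cone, with `x ∈ Δ₁`, `y ∈ Δ₂`, `θ ∈ [0, 1]`, equals
`θ • (x - u₁, 0) + (1 - θ) • (-u₁, y)`, so the cone lies in the cone `D` of the points
`(a • x - (a + b) • u₁, b • y)` with `a, b ≥ 0`. If two points of `D` add up to `t • (-u₁, u₂)`, the
first coordinates give `(a + a' + b + b' - t) • u₁ ∈ (a + a') • Δ₁` and the second ones give
`t • u₂ ∈ (b + b') • Δ₂`. As `0 ∈ Δᵢ` and `uᵢ ≠ 0` is extreme, `s • uᵢ ∈ c • Δᵢ` forces `s ≤ c`;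
hence `t = b + b'`, and the equality case of extremality puts both summands on the ray. So the ray
is a face of `D`, hence an extreme subset of the smaller cone.
-/

noncomputable section

open Pointwise

section Extreme

variable {E : Type*} [AddCommGroup E] [Module ℝ E] {Δ : Set E} {u : E}

lemma le_of_smul_mem_smul_set_of_mem_extremePoints (h0 : (0 : E) ∈ Δ)
    (hu : u ∈ Δ.extremePoints ℝ) (hu0 : u ≠ 0) {a r : ℝ} (ha : 0 ≤ a) (h : r • u ∈ a • Δ) :
    r ≤ a := by
  rcases ha.eq_or_lt with rfl | ha
  · have := Set.zero_smul_set_subset Δ h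
    simp_all
  by_contra! har
  have hs : 1 < r / a := (one_lt_div ha).2 har
  have hsu : (r / a) • u ∈ Δ := by
    rw [div_eq_inv_mul, mul_smul]
    exact (Set.mem_smul_set_iff_inv_smul_mem₀ ha.ne' _ _).1 h
  have hseg : u ∈ openSegment ℝ 0 ((r / a) • u) :=
    ⟨1 - (r / a)⁻¹, (r / a)⁻¹, sub_pos.2 (inv_lt_one_of_one_lt₀ hs), by positivity, by ring,
      by rw [smul_zero, zero_add, smul_smul, inv_mul_cancel₀ (by positivity), one_smul]⟩
  exact hu0 (hu.2 h0 hsu hseg).symm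

lemma eq_smul_of_add_eq_smul_of_mem_extremePoints (hu : u ∈ Δ.extremePoints ℝ) {a b : ℝ}
    (ha : 0 ≤ a) (hb : 0 ≤ b) {v w : E} (hv : v ∈ a • Δ) (hw : w ∈ b • Δ)
    (h : v + w = (a + b) • u) : v = a • u ∧ w = b • u := by
  obtain ⟨x, hx, rfl⟩ := hv
  obtain ⟨y, hy, rfl⟩ := hw
  rcases ha.eq_or_lt with rfl | ha
  · simp_all
  rcases hb.eq_or_lt with rfl | hb
  · simp_all
  have hab : 0 < a + b := add_pos ha hb
  have hseg : u ∈ openSegment ℝ x y :=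
    ⟨a / (a + b), b / (a + b), by positivity, by positivity, by field_simp, by
      rw [div_eq_inv_mul, div_eq_inv_mul, mul_smul, mul_smul, ← smul_add, h, smul_smul,
        inv_mul_cancel₀ hab.ne', one_smul]⟩
  obtain ⟨rfl, rfl⟩ := (mem_extremePoints.1 hu).2 x hx y hy hseg
  exact ⟨rfl, rfl⟩

lemma Convex.smul_add_smul_mem_smul_set (hΔ : Convex ℝ Δ) {a b c d : ℝ} (ha : 0 ≤ a)
    (hb : 0 ≤ b) (hc : 0 ≤ c) (hd : 0 ≤ d) {v w : E} (hv : v ∈ a • Δ) (hw : w ∈ b • Δ) :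
    c • v + d • w ∈ (c * a + d * b) • Δ := by
  rw [hΔ.add_smul (mul_nonneg hc ha) (mul_nonneg hd hb), mul_smul, mul_smul]
  exact Set.add_mem_add (Set.smul_mem_smul_set hv) (Set.smul_mem_smul_set hw)

lemma PointedCone.mem_hull_singleton {x w : E} :
    x ∈ PointedCone.hull ℝ {w} ↔ ∃ t : ℝ, 0 ≤ t ∧ x = t • w := by
  rw [Submodule.mem_span_singleton]
  constructor
  · rintro ⟨⟨t, ht⟩, rfl⟩
    exact ⟨t, ht, rfl⟩
  · rintro ⟨t, ht, rfl⟩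
    exact ⟨⟨t, ht⟩, rfl⟩

end Extreme

section JoinCone

variable {V₁ V₂ : Type*} [AddCommGroup V₁] [Module ℝ V₁] [AddCommGroup V₂] [Module ℝ V₂]
  {Δ₁ : Set V₁} {Δ₂ : Set V₂}

/-- The pointed cone generated by `(Δ₁ - u₁) × {0}` and `{-u₁} × Δ₂`: the point
`(a • x - (a + b) • u₁, b • y)` is `a • (x - u₁, 0) + b • (-u₁, y)`. -/
def joinCone (hΔ₁ : Convex ℝ Δ₁) (hΔ₂ : Convex ℝ Δ₂) (hne₁ : Δ₁.Nonempty)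
    (hne₂ : Δ₂.Nonempty) (u₁ : V₁) : PointedCone ℝ (V₁ × V₂) :=
  .ofConeComb {z | ∃ a b : ℝ, 0 ≤ a ∧ 0 ≤ b ∧ z.1 + (a + b) • u₁ ∈ a • Δ₁ ∧ z.2 ∈ b • Δ₂}
    ⟨0, 0, 0, le_rfl, le_rfl, by simp [Set.zero_smul_set hne₁, Set.zero_smul_set hne₂]⟩ <| by
      rintro z ⟨a, b, ha, hb, hz₁, hz₂⟩ z' ⟨a', b', ha', hb', hz₁', hz₂'⟩ c hc d hd
      refine ⟨c * a + d * a', c * b + d * b', by positivity, by positivity, ?_,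
        hΔ₂.smul_add_smul_mem_smul_set hb hb' hc hd hz₂ hz₂'⟩
      convert hΔ₁.smul_add_smul_mem_smul_set ha ha' hc hd hz₁ hz₁' using 1
      simp only [Prod.fst_add, Prod.smul_fst]
      module

theorem isFaceOf_joinCone (hΔ₁ : Convex ℝ Δ₁) (hΔ₂ : Convex ℝ Δ₂) (h0₁ : (0 : V₁) ∈ Δ₁)
    (h0₂ : (0 : V₂) ∈ Δ₂) {u₁ : V₁} (hu₁ : u₁ ∈ Δ₁.extremePoints ℝ) (hu₁0 : u₁ ≠ 0) {u₂ : V₂}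
    (hu₂ : u₂ ∈ Δ₂.extremePoints ℝ) (hu₂0 : u₂ ≠ 0) :
    (PointedCone.hull ℝ {(-u₁, u₂)}).IsFaceOf (joinCone hΔ₁ hΔ₂ ⟨0, h0₁⟩ ⟨0, h0₂⟩ u₁) := by
  refine .of_mem_of_add_mem_left ?_ ?_
  · rw [Submodule.span_le, Set.singleton_subset_iff]
    exact ⟨0, 1, le_rfl, zero_le_one, by simpa using Set.zero_mem_smul_set h0₁,
      by simpa using hu₂.1⟩
  rintro z z' ⟨a, b, ha, hb, hz₁, hz₂⟩ ⟨a', b', ha', hb', hz₁', hz₂'⟩ hzz'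
  obtain ⟨t, -, ht⟩ := PointedCone.mem_hull_singleton.1 hzz'
  have hfst : (z.1 + (a + b) • u₁) + (z'.1 + (a' + b') • u₁) = (a + a' + (b + b' - t)) • u₁ := by
    have := congrArg Prod.fst ht
    simp only [Prod.fst_add, Prod.smul_fst] at this
    linear_combination (norm := module) this
  have hsnd : z.2 + z'.2 = t • u₂ := by simpa using congrArg Prod.snd ht
  have hmem₁ := hΔ₁.add_smul ha ha' ▸ Set.add_mem_add hz₁ hz₁'
  have hmem₂ := hΔ₂.add_smul hb hb' ▸ Set.add_mem_add hz₂ hz₂'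
  have hle : b + b' ≤ t := by
    have := le_of_smul_mem_smul_set_of_mem_extremePoints h0₁ hu₁ hu₁0 (add_nonneg ha ha')
      (hfst ▸ hmem₁)
    linarith
  have hge : t ≤ b + b' :=
    le_of_smul_mem_smul_set_of_mem_extremePoints h0₂ hu₂ hu₂0 (add_nonneg hb hb') (hsnd ▸ hmem₂)
  obtain rfl : t = b + b' := le_antisymm hge hle
  rw [sub_self, add_zero] at hfst
  have e₁ := (eq_smul_of_add_eq_smul_of_mem_extremePoints hu₁ ha ha' hz₁ hz₁' hfst).1
  have e₂ := (eq_smul_of_add_eq_smul_of_mem_extremePoints hu₂ hb hb' hz₂ hz₂' hsnd).1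
  refine PointedCone.mem_hull_singleton.2 ⟨b, hb, Prod.ext ?_ e₂⟩
  simp only [Prod.smul_fst]
  linear_combination (norm := module) e₁

lemma convexHull_subset_joinCone {s₁ : Set V₁} {s₂ : Set V₂} (hΔ₁ : Convex ℝ Δ₁)
    (hΔ₂ : Convex ℝ Δ₂) (hne₁ : Δ₁.Nonempty) (hne₂ : Δ₂.Nonempty) (u₁ : V₁) (hs₁ : s₁ ⊆ Δ₁)
    (hs₂ : s₂ ⊆ Δ₂) :
    convexHull ℝ ((s₁ ×ˢ {0}) ∪ ({0} ×ˢ s₂)) ⊆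
      (· - (u₁, 0)) ⁻¹' joinCone hΔ₁ hΔ₂ hne₁ hne₂ u₁ := by
  refine convexHull_min ?_ ?_
  · rintro ⟨x, y⟩ (⟨hx, rfl : y = 0⟩ | ⟨rfl : x = 0, hy⟩)
    · exact ⟨1, 0, zero_le_one, le_rfl, by simpa using hs₁ hx,
        by simp [Set.zero_smul_set hne₂]⟩
    · exact ⟨0, 1, le_rfl, zero_le_one, by simp [Set.zero_smul_set hne₁],
        by simpa using hs₂ hy⟩
  · simpa only [sub_eq_neg_add] using
      (joinCone hΔ₁ hΔ₂ hne₁ hne₂ u₁).convex.translate_preimage_right (-(u₁, 0))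

end JoinCone

section ConeGen

variable {V : Type*} [AddCommGroup V] [Module ℝ V] {S : Set V}

lemma coneGen_subset {K : PointedCone ℝ V} (h : S ⊆ K) : coneGen S ⊆ K := by
  rintro _ ⟨n, c, f, hc, hf, rfl⟩
  exact K.sum_mem fun i _ => K.smul_mem (hc i) (h (hf i))

lemma smul_mem_coneGen {c : ℝ} {x : V} (hc : 0 ≤ c) (hx : x ∈ S) : c • x ∈ coneGen S :=
  ⟨1, fun _ => c, fun _ => x, fun _ => hc, fun _ => hx, by simp⟩

end ConeGen

theorem stmt8_general (V₁ V₂ : Type*)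
    [AddCommGroup V₁] [Module ℝ V₁]
    [AddCommGroup V₂] [Module ℝ V₂]
    (R₁ : Set V₁) (R₂ : Set V₂)
    (h0₁ : (0 : V₁) ∈ convexHull ℝ R₁) (h0₂ : (0 : V₂) ∈ convexHull ℝ R₂)
    (u₁ : V₁) (hu₁ : u₁ ∈ (convexHull ℝ R₁).extremePoints ℝ) (hu₁0 : u₁ ≠ 0)
    (u₂ : V₂) (hu₂ : u₂ ∈ (convexHull ℝ R₂).extremePoints ℝ) (hu₂0 : u₂ ≠ 0) :
    IsExtreme ℝ
      (coneGen ((fun p => p - (u₁, (0 : V₂))) ''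
        convexHull ℝ ((R₁ ×ˢ ({0} : Set V₂)) ∪ (({0} : Set V₁) ×ˢ R₂))))
      {x : V₁ × V₂ | ∃ t : ℝ, 0 ≤ t ∧ x = t • (-u₁, u₂)} := by
  have hΔ₁ := convex_convexHull ℝ R₁
  have hΔ₂ := convex_convexHull ℝ R₂
  have hface := (isFaceOf_joinCone hΔ₁ hΔ₂ h0₁ h0₂ hu₁ hu₁0 hu₂ hu₂0).isExtreme
  rw [show (PointedCone.hull ℝ {(-u₁, u₂)} : Set (V₁ × V₂)) = _ from
    Set.ext fun _ => PointedCone.mem_hull_singleton] at hface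
  refine hface.mono (coneGen_subset (Set.image_subset_iff.2 ?_)) ?_
  · exact convexHull_subset_joinCone hΔ₁ hΔ₂ _ _ u₁ (subset_convexHull ℝ R₁)
      (subset_convexHull ℝ R₂)
  · rintro _ ⟨t, ht, rfl⟩
    refine smul_mem_coneGen ht ⟨(0, u₂), convexHull_mono Set.subset_union_right ?_, by simp⟩
    rw [convexHull_prod, convexHull_singleton]
    exact ⟨rfl, hu₂.1⟩

theorem stmt8 (V₁ V₂ : Type*)
    [AddCommGroup V₁] [Module ℝ V₁] [FiniteDimensional ℝ V₁]
    [AddCommGroup V₂] [Module ℝ V₂] [FiniteDimensional ℝ V₂]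
    (R₁ : Set V₁) (R₂ : Set V₂) (hR₁ : R₁.Finite) (hR₂ : R₂.Finite)
    (h0₁ : (0 : V₁) ∈ convexHull ℝ R₁) (h0₂ : (0 : V₂) ∈ convexHull ℝ R₂)
    (u₁ : V₁) (hu₁ : u₁ ∈ (convexHull ℝ R₁).extremePoints ℝ) (hu₁0 : u₁ ≠ 0)
    (u₂ : V₂) (hu₂ : u₂ ∈ (convexHull ℝ R₂).extremePoints ℝ) (hu₂0 : u₂ ≠ 0) :
    IsExtreme ℝ
      (coneGen ((fun p => p - (u₁, (0 : V₂))) ''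
        convexHull ℝ ((R₁ ×ˢ ({0} : Set V₂)) ∪ (({0} : Set V₁) ×ˢ R₂))))
      {x : V₁ × V₂ | ∃ t : ℝ, 0 ≤ t ∧ x = t • (-u₁, u₂)} :=
  stmt8_general V₁ V₂ R₁ R₂ h0₁ h0₂ u₁ hu₁ hu₁0 u₂ hu₂ hu₂0

end
end

section
/- Let r ≥ 3 and let σ be the convex cone generated by Δ(A_r) − (e_0 − e_2). Then for every integer a ≥ 1 and every index i with 3 ≤ i ≤ r, the vector a·(e_i − e_1) + (a − 1)·(e_0 − e_2) does not belong to σ. -/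
noncomputable section

lemma e_apply (r : ℕ) (p k : Fin (r + 1)) : e r p k = if k = p then 1 else 0 := by
  simp [e, Pi.single_apply]

/-- On the root polytope, the functional `x ↦ x 0 + x i` is bounded by 1 (for `i ≠ 0`). -/
lemma hull_bound (r : ℕ) (i : Fin (r + 1)) (hi0 : i ≠ 0) :
    ∀ x ∈ DeltaA r, x 0 + x i ≤ 1 := by
  have hconv : Convex ℝ {x : Fin (r + 1) → ℝ | x 0 + x i ≤ 1} := by
    intro x hx y hy a b ha hb hab
    simp only [Set.mem_setOf_eq, Pi.add_apply, Pi.smul_apply, smul_eq_mul] at *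
    nlinarith [mul_le_mul_of_nonneg_left hx ha, mul_le_mul_of_nonneg_left hy hb]
  have hsub : rootsA r ⊆ {x : Fin (r + 1) → ℝ | x 0 + x i ≤ 1} := by
    rintro v ⟨p, q, hpq, rfl⟩
    simp only [Set.mem_setOf_eq, Pi.sub_apply, e_apply]
    split_ifs with h1 h2 h3 h4 <;> simp_all
  exact fun x hx => convexHull_min hsub hconv hx

theorem stmt9 (r : ℕ) (hr : 3 ≤ r) (a : ℕ) (ha : 1 ≤ a)
    (i : Fin (r + 1)) (hi : 3 ≤ (i : ℕ)) :
    (a : ℝ) • (e r i - e r 1) + ((a : ℝ) - 1) • (e r 0 - e r 2) ∉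
      coneGen ((fun x => x - (e r 0 - e r 2)) '' DeltaA r) := by
  have hv0 : ((0 : Fin (r + 1)) : ℕ) = 0 := rfl
  have hv1 : ((1 : Fin (r + 1)) : ℕ) = 1 := by
    have : ((1 : Fin (r + 1)) : ℕ) = 1 % (r + 1) := rfl
    rw [this, Nat.mod_eq_of_lt (by omega)]
  have hv2 : ((2 : Fin (r + 1)) : ℕ) = 2 := by
    have : ((2 : Fin (r + 1)) : ℕ) = 2 % (r + 1) := rfl
    rw [this, Nat.mod_eq_of_lt (by omega)]
  have hi0 : i ≠ 0 := Fin.ne_of_val_ne (by omega)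
  have hi1 : i ≠ 1 := Fin.ne_of_val_ne (by omega)
  have hi2 : i ≠ 2 := Fin.ne_of_val_ne (by omega)
  have h01 : (0 : Fin (r + 1)) ≠ 1 := Fin.ne_of_val_ne (by omega)
  have h02 : (0 : Fin (r + 1)) ≠ 2 := Fin.ne_of_val_ne (by omega)
  rintro ⟨n, c, f, hc, hf, hsum⟩
  -- φ(e0 - e2) = 1
  have hφv0 : (e r 0 - e r 2) 0 + (e r 0 - e r 2) i = 1 := by
    simp [Pi.sub_apply, e_apply, hi0, hi2, h02]
  -- each generator has φ ≤ 0
  have hgen : ∀ k, f k 0 + f k i ≤ 0 := by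
    intro k
    obtain ⟨x, hxΔ, hxe⟩ := hf k
    have hb := hull_bound r i hi0 x hxΔ
    have : f k = x - (e r 0 - e r 2) := hxe.symm
    rw [this]
    simp only [Pi.sub_apply]
    have hv : e r 0 0 - e r 2 0 + (e r 0 i - e r 2 i) = 1 := by
      simp [e_apply, hi0, hi2, h02]
    linarith
  -- evaluate the sum at coordinates 0 and i
  have h0 := congrFun hsum 0
  have hii := congrFun hsum i
  simp only [Pi.add_apply, Pi.smul_apply, Pi.sub_apply, e_apply, smul_eq_mul,
    Finset.sum_apply, if_pos rfl, if_neg hi0, if_neg hi1, if_neg hi2,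
    if_neg h01, if_neg h02, if_neg (Ne.symm hi0)] at h0 hii
  -- the sum of the two evaluations is 2a - 1 ≥ 1, but is also ≤ 0
  have hle : ∑ k, c k * (f k 0 + f k i) ≤ 0 :=
    Finset.sum_nonpos fun k _ => mul_nonpos_of_nonneg_of_nonpos (hc k) (hgen k)
  have hsplit : ∑ k, c k * (f k 0 + f k i)
      = (∑ k, c k * f k 0) + ∑ k, c k * f k i := by
    rw [← Finset.sum_add_distrib]
    exact Finset.sum_congr rfl fun k _ => by ring
  have ha' : (1 : ℝ) ≤ a := by exact_mod_cast ha
  rw [hsplit] at hle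
  norm_num at h0 hii
  linarith

end
end

section
/- Let r ≥ 1 and let J be a nonempty proper subset of {0, 1, …, r}. Then the set of extreme points of Δ(A_r) ∩ {x ∈ ℝ^{r+1} : Σ_{i ∈ J} x_i = 1} is exactly {e_i − e_j : i ∈ J, j ∉ J}. -/
noncomputable section

/-- If a linear functional is at most `c` on `s` and equals `c` at a point of the convex hull,
then that point is in the convex hull of the subset of `s` where `f = c`. -/
lemma mem_convexHull_face {E : Type*} [AddCommGroup E] [Module ℝ E]
    {s : Set E} {f : E → ℝ} (hf : IsLinearMap ℝ f) {c : ℝ}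
    (hs : ∀ u ∈ s, f u ≤ c) {x : E} (hx : x ∈ convexHull ℝ s) (hxc : f x = c) :
    x ∈ convexHull ℝ {u ∈ s | f u = c} := by
  rw [convexHull_eq] at hx
  obtain ⟨ι, t, w, z, h0, h1, hz, hcm⟩ := hx
  have hx' : x = ∑ k ∈ t, w k • z k := by rw [← hcm, Finset.centerMass_eq_of_sum_1 _ _ h1]
  have hfx : ∑ k ∈ t, w k * f (z k) = c := by
    have : f x = ∑ k ∈ t, w k * f (z k) := by
      rw [hx']
      rw [show f = (hf.mk' f : E →ₗ[ℝ] ℝ) from rfl]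
      simp [map_sum, map_smul, smul_eq_mul]
    rw [← this, hxc]
  have hkey : ∀ k ∈ t, w k * f (z k) = w k * c := by
    have hle : ∀ k ∈ t, w k * f (z k) ≤ w k * c := fun k hk =>
      mul_le_mul_of_nonneg_left (hs _ (hz k hk)) (h0 k hk)
    have hsum : ∑ k ∈ t, w k * f (z k) = ∑ k ∈ t, w k * c := by
      rw [hfx, ← Finset.sum_mul, h1, one_mul]
    exact (Finset.sum_eq_sum_iff_of_le hle).1 hsum
  have hmem : ∀ k ∈ {k ∈ t | w k ≠ 0}, z k ∈ {u ∈ s | f u = c} := by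
    intro k hk
    rw [Finset.mem_filter] at hk
    obtain ⟨hkt, hkw⟩ := hk
    refine ⟨hz k hkt, ?_⟩
    have := hkey k hkt
    exact mul_left_cancel₀ hkw this
  rw [← hcm, ← Finset.centerMass_filter_ne_zero (w := w)]
  refine Finset.centerMass_mem_convexHull _ (fun k hk => h0 k (Finset.mem_filter.1 hk).1) ?_ hmem
  rw [Finset.sum_filter_ne_zero, h1]
  exact one_pos

lemma sum_e_eq (r : ℕ) (J : Finset (Fin (r + 1))) (a : Fin (r + 1)) :
    ∑ k ∈ J, e r a k = if a ∈ J then (1 : ℝ) else 0 := by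
  simp [e, Pi.single_apply, Finset.sum_ite_eq']

lemma sumJ_linear (r : ℕ) (J : Finset (Fin (r + 1))) :
    IsLinearMap ℝ (fun x : Fin (r + 1) → ℝ => ∑ k ∈ J, x k) := by
  constructor
  · intro x y; simp [Finset.sum_add_distrib]
  · intro c x; simp [Finset.mul_sum]

lemma sub_linear (r : ℕ) (i j : Fin (r + 1)) :
    IsLinearMap ℝ (fun x : Fin (r + 1) → ℝ => x i - x j) := by
  constructor
  · intro x y; simp; ring
  · intro c x; simp; ring

theorem stmt13 (r : ℕ) (hr : 1 ≤ r) (J : Finset (Fin (r + 1)))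
    (hJne : J.Nonempty) (hJproper : J ≠ Finset.univ) :
    (DeltaA r ∩ {x | ∑ i ∈ J, x i = 1}).extremePoints ℝ =
      {v | ∃ i ∈ J, ∃ j ∉ J, v = e r i - e r j} := by
  classical
  set F : Set (Fin (r + 1) → ℝ) := {v | ∃ i ∈ J, ∃ j ∉ J, v = e r i - e r j} with hF
  have hfJ := sumJ_linear r J
  -- value of the functional on a root
  have hval : ∀ a b : Fin (r + 1), ∑ k ∈ J, (e r a - e r b) k =
      (if a ∈ J then (1 : ℝ) else 0) - (if b ∈ J then 1 else 0) := by
    intro a b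
    simp only [Pi.sub_apply, Finset.sum_sub_distrib, sum_e_eq]
  have hroot_le : ∀ v ∈ rootsA r, ∑ k ∈ J, v k ≤ 1 := by
    rintro v ⟨a, b, hab, rfl⟩
    rw [hval]
    split_ifs <;> norm_num
  have hF_sub_roots : F ⊆ rootsA r := by
    rintro v ⟨i, hi, j, hj, rfl⟩
    exact ⟨i, j, fun h => hj (h ▸ hi), rfl⟩
  -- Step 1 : the section equals the convex hull of F
  have hSF : DeltaA r ∩ {x | ∑ i ∈ J, x i = 1} = convexHull ℝ F := by
    apply Set.Subset.antisymm
    · rintro x ⟨hx, hx1⟩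
      have := mem_convexHull_face hfJ hroot_le hx (by exact hx1)
      refine convexHull_mono ?_ this
      rintro u ⟨⟨a, b, hab, rfl⟩, hu⟩
      rw [hval] at hu
      refine ⟨a, ?_, b, ?_, rfl⟩ <;> by_contra h <;> simp [h] at hu <;> split_ifs at hu <;>
        norm_num at hu
    · apply convexHull_min
      · rintro v hv
        refine ⟨subset_convexHull ℝ _ (hF_sub_roots hv), ?_⟩
        obtain ⟨i, hi, j, hj, rfl⟩ := hv
        show ∑ k ∈ J, (e r i - e r j) k = 1
        rw [hval]
        simp [hi, hj]
      · exact (convex_convexHull ℝ _).inter (convex_hyperplane hfJ 1)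
  rw [hSF]
  apply Set.Subset.antisymm
  · exact extremePoints_convexHull_subset
  -- Step 2 : every element of F is an extreme point
  rintro v ⟨i, hi, j, hj, rfl⟩
  have hg := sub_linear r i j
  set g : (Fin (r + 1) → ℝ) → ℝ := fun x => x i - x j with hgdef
  have hij : i ≠ j := fun h => hj (h ▸ hi)
  -- g on elements of F
  have hgF : ∀ u ∈ F, g u ≤ 2 := by
    rintro u ⟨a, ha, b, hb, rfl⟩
    show (e r a - e r b) i - (e r a - e r b) j ≤ 2
    simp only [Pi.sub_apply, e, Pi.single_apply]
    split_ifs <;> norm_num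
  have hgv : g (e r i - e r j) = 2 := by
    show (e r i - e r j) i - (e r i - e r j) j = 2
    norm_num [e, Pi.single_apply, hij, hij.symm]
  -- elements of F where g = 2 are exactly v
  have huniq : {u ∈ F | g u = 2} = {e r i - e r j} := by
    apply Set.Subset.antisymm
    · rintro u ⟨⟨a, ha, b, hb, rfl⟩, hu⟩
      have h2 : (e r a - e r b) i - (e r a - e r b) j = 2 := hu
      simp only [Pi.sub_apply, e, Pi.single_apply] at h2
      have hai : i = a := by by_contra h; simp [h] at h2; split_ifs at h2 <;> norm_num at h2
      have hib : ¬ i = b := fun hx => hb (hx ▸ hi)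
      have hja : ¬ j = a := fun hx => hij (hai.trans hx.symm)
      have hbj : j = b := by
        by_contra h
        rw [if_pos hai, if_neg hib, if_neg hja, if_neg h] at h2
        norm_num at h2
      rw [← hai, ← hbj]; rfl
    · rintro u rfl
      exact ⟨⟨i, hi, j, hj, rfl⟩, hgv⟩
  -- g ≤ 2 on the hull of F
  have hhull_le : ∀ x ∈ convexHull ℝ F, g x ≤ 2 :=
    fun x hx => convexHull_min hgF (convex_halfSpace_le hg 2) hx
  -- points of the hull with g = 2 equal v
  have hface : ∀ x ∈ convexHull ℝ F, g x = 2 → x = e r i - e r j := by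
    intro x hx hx2
    have := mem_convexHull_face hg hgF hx hx2
    rw [huniq, convexHull_singleton] at this
    exact this
  rw [mem_extremePoints]
  refine ⟨subset_convexHull ℝ _ ⟨i, hi, j, hj, rfl⟩, ?_⟩
  intro x1 hx1 x2 hx2 hseg
  obtain ⟨a, b, ha, hb, hab, hsum⟩ := hseg
  have h1 : g x1 ≤ 2 := hhull_le _ hx1
  have h2 : g x2 ≤ 2 := hhull_le _ hx2
  have hgsum : a * g x1 + b * g x2 = 2 := by
    have : g (a • x1 + b • x2) = a * g x1 + b * g x2 := by
      rw [hg.map_add, hg.map_smul, hg.map_smul]; simp [smul_eq_mul]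
    rw [← this, hsum, hgv]
  have hg1 : g x1 = 2 := by nlinarith
  have hg2 : g x2 = 2 := by nlinarith
  exact ⟨hface _ hx1 hg1, hface _ hx2 hg2⟩
end
end
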